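/- arXiv:1301.1790 — 6 statements merged into one kernel-verified Lean document; each statement's English description precedes it below -/
import Mathlib

section
/- A permutation τ = x₁x₂…x_j of a finite set of integers avoids both 123 and 132 if and only if for every i ≤ j, the entry x_i is either the greatest or the second greatest element of the set {x_i, x_{i+1}, …, x_j}. -/
/-!
An entry with two larger later entries `w l₁`, `w l₂` (`l₁ < l₂`) starts a `123` or a `132`,
according to which of the two is larger. Conversely, both patterns begin with their smallest
entry, and in any occurrence that entry has two larger later entries.
-/

/-- A word `w` (an injective sequence of integers) contains the pattern `τ`
(given by its list of values): some subsequence of `w` is order-isomorphic to `τ`. -/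
def ContainsW {j k : ℕ} (w : Fin j → ℤ) (τ : Fin k → ℕ) : Prop :=
  ∃ f : Fin k → Fin j, StrictMono f ∧ ∀ a b : Fin k, τ a < τ b ↔ w (f a) < w (f b)

section

variable {j : ℕ} {w : Fin j → ℤ}

lemma containsW_012 {i l₁ l₂ : Fin j} (hl₁ : i < l₁) (hl₂ : l₁ < l₂)
    (hw₁ : w i < w l₁) (hw₂ : w l₁ < w l₂) : ContainsW w ![0, 1, 2] := by
  refine ⟨![i, l₁, l₂], (strictMono_vecEmpty.vecCons hl₂).vecCons hl₁, fun a b => ?_⟩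
  fin_cases a <;> fin_cases b <;> simp <;> omega

lemma containsW_021 {i l₁ l₂ : Fin j} (hl₁ : i < l₁) (hl₂ : l₁ < l₂)
    (hw₁ : w i < w l₂) (hw₂ : w l₂ < w l₁) : ContainsW w ![0, 2, 1] := by
  refine ⟨![i, l₁, l₂], (strictMono_vecEmpty.vecCons hl₂).vecCons hl₁, fun a b => ?_⟩
  fin_cases a <;> fin_cases b <;> simp <;> omega

lemma ContainsW.exists_not_subsingleton {k : ℕ} {τ : Fin k → ℕ} (hτ : ContainsW w τ)
    {a b c : Fin k} (hab : a < b) (hac : a < c) (hbc : b ≠ c) (hτb : τ a < τ b)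
    (hτc : τ a < τ c) : ∃ i, ¬ {l : Fin j | i ≤ l ∧ w i < w l}.Subsingleton := by
  obtain ⟨f, hf, hfτ⟩ := hτ
  refine ⟨f a, fun h => hbc (hf.injective (h ?_ ?_))⟩
  · exact ⟨(hf hab).le, (hfτ a b).1 hτb⟩
  · exact ⟨(hf hac).le, (hfτ a c).1 hτc⟩

end

/-- A word avoids both `123` and `132` iff every entry is either the greatest or
the second greatest of the set of entries from that position onward, i.e. at most
one later entry exceeds it. -/
theorem avoid_123_132_iff (j : ℕ) (w : Fin j → ℤ) (hw : Function.Injective w) :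
    (¬ ContainsW w ![0,1,2] ∧ ¬ ContainsW w ![0,2,1]) ↔
      ∀ i : Fin j, {l : Fin j | i ≤ l ∧ w i < w l}.Subsingleton := by
  constructor
  · rintro ⟨h123, h132⟩ i l₁ ⟨hi₁, hw₁⟩ l₂ ⟨hi₂, hw₂⟩
    by_contra hne
    wlog hl : l₁ < l₂ generalizing l₁ l₂
    · exact this hi₂ hw₂ hi₁ hw₁ (Ne.symm hne) ((not_lt.1 hl).lt_of_ne' hne)
    have hi : i < l₁ := hi₁.lt_of_ne (by rintro rfl; exact lt_irrefl _ hw₁)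
    rcases lt_trichotomy (w l₁) (w l₂) with hw' | hw' | hw'
    · exact h123 (containsW_012 hi hl hw₁ hw')
    · exact hne (hw hw')
    · exact h132 (containsW_021 hi hl hw₂ hw')
  · intro h
    refine ⟨fun hc => ?_, fun hc => ?_⟩ <;>
    · obtain ⟨i, hi⟩ := hc.exists_not_subsingleton (a := 0) (b := 1) (c := 2)
        (by decide) (by decide) (by decide) (by decide) (by decide)
      exact hi (h i)
end

section
/- The map that deletes the last symbol gives a bijection between the set of permutations of [n] avoiding {3214, 3241, 4213, 4231} whose last entry is n, and the set of permutations of [n-1] avoiding 321. -/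
/-!
Every pattern of `T₁ = {3214, 3241, 4213, 4231}` contains `321` (at positions `1, 2, 3` or
`1, 2, 4`), and a `321` in a permutation ending with its maximum cannot use the last entry, so it
survives deleting that entry. Conversely a `321` in the shortened permutation, followed by the
final maximum, is a `3214`.
-/

def Contains {n k : ℕ} (σ : Equiv.Perm (Fin n)) (τ : Fin k → ℕ) : Prop :=
  ∃ f : Fin k → Fin n, StrictMono f ∧ ∀ a b : Fin k, τ a < τ b ↔ σ (f a) < σ (f b)

def AvoidsT1 {n : ℕ} (σ : Equiv.Perm (Fin n)) : Prop :=
  ¬ Contains σ ![2,1,0,3] ∧ ¬ Contains σ ![2,1,3,0] ∧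
  ¬ Contains σ ![3,1,0,2] ∧ ¬ Contains σ ![3,1,2,0]

namespace Equiv.Perm

variable {n : ℕ}

def extendLast (π : Perm (Fin n)) : Perm (Fin (n + 1)) where
  toFun := Fin.lastCases (Fin.last n) fun i => (π i).castSucc
  invFun := Fin.lastCases (Fin.last n) fun i => (π.symm i).castSucc
  left_inv i := by induction i using Fin.lastCases <;> simp
  right_inv i := by induction i using Fin.lastCases <;> simp

@[simp] lemma extendLast_last (π : Perm (Fin n)) : extendLast π (Fin.last n) = Fin.last n := by
  simp [extendLast]

@[simp] lemma extendLast_castSucc (π : Perm (Fin n)) (i : Fin n) :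
    extendLast π i.castSucc = (π i).castSucc := by
  simp [extendLast]

lemma apply_castSucc_ne_last {σ : Perm (Fin (n + 1))} (h : σ (Fin.last n) = Fin.last n)
    (i : Fin n) : σ i.castSucc ≠ Fin.last n :=
  fun he => (Fin.castSucc_lt_last i).ne (σ.injective (he.trans h.symm))

def restrictLast (σ : Perm (Fin (n + 1))) (h : σ (Fin.last n) = Fin.last n) : Perm (Fin n) where
  toFun i := (σ i.castSucc).castPred (apply_castSucc_ne_last h i)
  invFun i := (σ.symm i.castSucc).castPred
    (apply_castSucc_ne_last (σ.symm_apply_eq.mpr h.symm) i)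
  left_inv i := by simp
  right_inv i := by simp

@[simp] lemma castSucc_restrictLast_apply {σ : Perm (Fin (n + 1))}
    (h : σ (Fin.last n) = Fin.last n) (i : Fin n) :
    (restrictLast σ h i).castSucc = σ i.castSucc := by
  simp [restrictLast]

lemma extendLast_restrictLast {σ : Perm (Fin (n + 1))} (h : σ (Fin.last n) = Fin.last n) :
    extendLast (restrictLast σ h) = σ := by
  ext i
  induction i using Fin.lastCases with
  | last => simp [h]
  | cast i => simp

lemma restrictLast_extendLast (π : Perm (Fin n)) :
    restrictLast (extendLast π) (extendLast_last π) = π := by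
  ext i
  exact congrArg Fin.val (Fin.castSucc_injective n (by simp))

def fixLastEquiv : {σ : Perm (Fin (n + 1)) // σ (Fin.last n) = Fin.last n} ≃ Perm (Fin n) where
  toFun σ := restrictLast σ.1 σ.2
  invFun π := ⟨extendLast π, extendLast_last π⟩
  left_inv σ := Subtype.ext (extendLast_restrictLast σ.2)
  right_inv := restrictLast_extendLast

end Equiv.Perm

open Equiv Perm

variable {n k j : ℕ}

lemma Contains.trans {σ : Perm (Fin n)} {τ : Fin k → ℕ} {ρ : Fin j → ℕ} (hσ : Contains σ τ)
    (hτ : ∃ g : Fin j → Fin k, StrictMono g ∧ ∀ a b, ρ a < ρ b ↔ τ (g a) < τ (g b)) :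
    Contains σ ρ := by
  obtain ⟨f, hf, hfσ⟩ := hσ
  obtain ⟨g, hg, hgτ⟩ := hτ
  exact ⟨f ∘ g, hf.comp hg, fun a b => (hgτ a b).trans (hfσ _ _)⟩

lemma Contains.extendLast {π : Perm (Fin n)} {ρ : Fin (k + 1) → ℕ}
    (hπ : Contains π (ρ ∘ Fin.castSucc)) (hρ : ∀ a : Fin k, ρ a.castSucc < ρ (Fin.last k)) :
    Contains (extendLast π) ρ := by
  obtain ⟨f, hf, hfπ⟩ := hπ
  refine ⟨Fin.lastCases (Fin.last n) (Fin.castSucc ∘ f), ?_, ?_⟩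
  · intro a b hab
    induction b using Fin.lastCases with
    | last =>
      induction a using Fin.lastCases with
      | last => exact absurd hab (lt_irrefl _)
      | cast a => simp [Fin.castSucc_lt_last]
    | cast b =>
      induction a using Fin.lastCases with
      | last => exact absurd hab (Fin.castSucc_lt_last b).not_gt
      | cast a => simpa using hf (Fin.castSucc_lt_castSucc_iff.mp hab)
  · intro a b
    induction a using Fin.lastCases <;> induction b using Fin.lastCases
    · simp
    · simp [(hρ _).not_gt, Fin.le_last]
    · simp [hρ, Fin.castSucc_lt_last]
    · simpa using hfπ _ _

lemma Contains.restrictLast {σ : Perm (Fin (n + 1))} (h : σ (Fin.last n) = Fin.last n)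
    {ρ : Fin (k + 1) → ℕ} (hσ : Contains σ ρ) (hρ : ∃ a, ρ (Fin.last k) < ρ a) :
    Contains (restrictLast σ h) ρ := by
  obtain ⟨f, hf, hfσ⟩ := hσ
  obtain ⟨a, ha⟩ := hρ
  have hlast : f (Fin.last k) ≠ Fin.last n := by
    intro he
    have := (hfσ _ _).mp ha
    rw [he, h] at this
    exact (Fin.le_last _).not_gt this
  have hne (i : Fin (k + 1)) : f i ≠ Fin.last n :=
    ((hf.monotone (Fin.le_last i)).trans_lt (Fin.lt_last_iff_ne_last.mpr hlast)).ne
  refine ⟨fun i => (f i).castPred (hne i),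
    fun a b hab => Fin.castPred_lt_castPred_iff.mpr (hf hab), fun a b => ?_⟩
  simp only [hfσ, ← Fin.castSucc_lt_castSucc_iff (n := n), castSucc_restrictLast_apply,
    Fin.castSucc_castPred]

lemma avoidsT1_iff_not_contains_321_restrictLast {σ : Perm (Fin (n + 1))}
    (h : σ (Fin.last n) = Fin.last n) :
    AvoidsT1 σ ↔ ¬ Contains (restrictLast σ h) ![2,1,0] := by
  constructor
  · intro hσ h321
    apply hσ.1
    rw [← extendLast_restrictLast h]
    have h321' : Contains (restrictLast σ h) (![2,1,0,3] ∘ Fin.castSucc) := by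
      rwa [show ![2,1,0,3] ∘ Fin.castSucc = ![2,1,0] by decide]
    exact h321'.extendLast (by decide)
  · intro h321
    have avoids {ρ : Fin 4 → ℕ} (g : Fin 3 → Fin 4) (hg : StrictMono g)
        (hgρ : ∀ a b, ![2,1,0] a < ![2,1,0] b ↔ ρ (g a) < ρ (g b)) : ¬ Contains σ ρ :=
      fun hρ => h321 ((hρ.trans ⟨g, hg, hgρ⟩).restrictLast h ⟨0, by decide⟩)
    exact ⟨avoids ![0,1,2] (by decide) (by decide), avoids ![0,1,3] (by decide) (by decide),
      avoids ![0,1,2] (by decide) (by decide), avoids ![0,1,3] (by decide) (by decide)⟩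

theorem delete_last_bijection_T1_general (n : ℕ) :
    ∃ e : {σ : Equiv.Perm (Fin (n + 1)) // σ (Fin.last n) = Fin.last n ∧ AvoidsT1 σ} ≃
          {π : Equiv.Perm (Fin n) // ¬ Contains π ![2,1,0]},
      ∀ (σ : {σ : Equiv.Perm (Fin (n + 1)) // σ (Fin.last n) = Fin.last n ∧ AvoidsT1 σ})
        (i : Fin n),
        (((e σ : Equiv.Perm (Fin n)) i : ℕ)) =
          (((σ : Equiv.Perm (Fin (n + 1))) i.castSucc : ℕ)) := by
  refine ⟨(subtypeSubtypeEquivSubtypeInter _ _).symm.trans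
    (fixLastEquiv.subtypeEquiv fun σ => avoidsT1_iff_not_contains_321_restrictLast σ.2), ?_⟩
  rintro ⟨σ, hlast, -⟩ i
  exact congrArg Fin.val (castSucc_restrictLast_apply hlast i)

/-- Deleting the last symbol is a bijection between permutations of `[n+1]`
avoiding `T₁ = {3214, 3241, 4213, 4231}` ending with the maximum symbol, and
permutations of `[n]` avoiding `321`. -/
theorem delete_last_bijection_T1 (n : ℕ) (hn : 1 ≤ n) :
    ∃ e : {σ : Equiv.Perm (Fin (n + 1)) // σ (Fin.last n) = Fin.last n ∧ AvoidsT1 σ} ≃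
          {π : Equiv.Perm (Fin n) // ¬ Contains π ![2,1,0]},
      ∀ (σ : {σ : Equiv.Perm (Fin (n + 1)) // σ (Fin.last n) = Fin.last n ∧ AvoidsT1 σ})
        (i : Fin n),
        (((e σ : Equiv.Perm (Fin n)) i : ℕ)) =
          (((σ : Equiv.Perm (Fin (n + 1))) i.castSucc : ℕ)) :=
  delete_last_bijection_T1_general n
end

section
/- The map that deletes the last symbol gives a bijection between the set of permutations of [n] avoiding {3124, 3142, 4123, 4132} whose last entry is n, and the set of permutations of [n-1] avoiding 312. -/
def AvoidsT2 {n : ℕ} (σ : Equiv.Perm (Fin n)) : Prop :=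
  ¬ Contains σ ![2,0,1,3] ∧ ¬ Contains σ ![2,0,3,1] ∧
  ¬ Contains σ ![3,0,1,2] ∧ ¬ Contains σ ![3,0,2,1]

/-!
Let `σ` be a permutation of `[n+1]` ending with `n + 1` and `π` the permutation of `[n]` left
after deleting that entry. An occurrence of `312` in `π` followed by the final `n + 1` is an
occurrence of `3124` in `σ`. Conversely each pattern of `T₂` contains `312` (at positions
`1,2,3` or `1,2,4`), and an occurrence of `312` in `σ` cannot use the last position, whose value
is the maximum, so it lies in `π`. Hence `σ` avoids `T₂` iff `π` avoids `312`, and `σ ↦ π` is a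
bijection.
-/

open Equiv Fin

variable {n k : ℕ}

theorem Contains.of_subpattern {σ : Perm (Fin n)} {τ : Fin k → ℕ} {j : ℕ} {ρ : Fin j → ℕ}
    (g : Fin j → Fin k) (hg : StrictMono g) (hρ : ∀ a b, ρ a < ρ b ↔ τ (g a) < τ (g b))
    (h : Contains σ τ) : Contains σ ρ := by
  obtain ⟨f, hf, hτ⟩ := h
  exact ⟨f ∘ g, hf.comp hg, fun a b => (hρ a b).trans (hτ _ _)⟩

section FixLast

variable {σ : Perm (Fin (n + 1))} {π : Perm (Fin n)}

theorem Contains.snoc_of_castSucc (hσπ : ∀ i, σ i.castSucc = (π i).castSucc)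
    (hσ : σ (last n) = last n) {τ : Fin (k + 1) → ℕ} {m : ℕ} (hm : ∀ i, τ i < m)
    (h : Contains π τ) : Contains σ (snoc τ m) := by
  obtain ⟨f, hf, hτ⟩ := h
  refine ⟨snoc (castSucc ∘ f) (last n), ?_, fun a b => ?_⟩
  · rw [← insertNth_last']
    exact strictMono_insertNth_last (strictMono_castSucc.comp hf) _ (castSucc_lt_last _)
  · induction a using lastCases <;> induction b using lastCases <;>
      simp [hσπ, hσ, hτ, hm, castSucc_lt_last, fun i => not_lt.2 (hm i).le,
        fun x : Fin n => not_lt.2 (castSucc_lt_last x).le]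

theorem Contains.of_castSucc (hσπ : ∀ i, σ i.castSucc = (π i).castSucc)
    (hσ : σ (last n) = last n) {τ : Fin (k + 1) → ℕ} (hτ : ∃ i, τ (last k) < τ i)
    (h : Contains σ τ) : Contains π τ := by
  obtain ⟨f, hf, hτf⟩ := h
  obtain ⟨i, hi⟩ := hτ
  have hlast : f (last k) < last n := by
    refine lt_last_iff_ne_last.2 fun he => ?_
    have := (hτf _ _).1 hi
    rw [he, hσ] at this
    exact (le_last _).not_gt this
  have hne a : f a ≠ last n := (lt_of_le_of_lt (hf.monotone (le_last a)) hlast).ne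
  refine ⟨fun a => (f a).castPred (hne a), fun a b hab => castPred_lt_castPred_iff.2 (hf hab),
    fun a b => ?_⟩
  rw [hτf, ← castSucc_lt_castSucc_iff (a := π _), ← hσπ, ← hσπ, castSucc_castPred,
    castSucc_castPred]

theorem avoidsT2_iff_not_contains_312 (hσπ : ∀ i, σ i.castSucc = (π i).castSucc)
    (hσ : σ (last n) = last n) : AvoidsT2 σ ↔ ¬ Contains π ![2, 0, 1] := by
  have contains_312 {τ : Fin 4 → ℕ} (g : Fin 3 → Fin 4) (hg : StrictMono g)
      (hρ : ∀ a b, (![2, 0, 1] : Fin 3 → ℕ) a < ![2, 0, 1] b ↔ τ (g a) < τ (g b))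
      (h : Contains σ τ) : Contains π ![2, 0, 1] :=
    (h.of_subpattern g hg hρ).of_castSucc hσπ hσ ⟨0, by decide⟩
  have mono_012 : StrictMono ![(0 : Fin 4), 1, 2] := strictMono_iff_lt_succ.2 (by decide)
  have mono_013 : StrictMono ![(0 : Fin 4), 1, 3] := strictMono_iff_lt_succ.2 (by decide)
  refine ⟨fun hT h => hT.1 ?_, fun h => ⟨?_, ?_, ?_, ?_⟩⟩
  · have : (![2, 0, 1, 3] : Fin 4 → ℕ) = snoc ![2, 0, 1] 3 := by decide
    exact this ▸ h.snoc_of_castSucc hσπ hσ (by decide)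
  · exact fun hc => h (contains_312 _ mono_012 (by decide) hc)
  · exact fun hc => h (contains_312 _ mono_013 (by decide) hc)
  · exact fun hc => h (contains_312 _ mono_012 (by decide) hc)
  · exact fun hc => h (contains_312 _ mono_013 (by decide) hc)

end FixLast

def Equiv.Perm.extendLastEquiv (n : ℕ) :
    Perm (Fin n) ≃ {σ : Perm (Fin (n + 1)) // σ (last n) = last n} :=
  ((finSuccAboveEquiv (last n)).permCongr.trans (Perm.subtypeEquivSubtypePerm _)).trans
    (subtypeEquivRight fun σ => by simp)

theorem Equiv.Perm.extendLastEquiv_apply_castSucc (π : Perm (Fin n)) (i : Fin n) :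
    (extendLastEquiv n π).1 i.castSucc = (π i).castSucc := by
  simp [extendLastEquiv, Perm.ofSubtype_apply_of_mem (p := (· ≠ last n)) _ (castSucc_ne_last i),
    finSuccAboveEquiv_apply, finSuccAboveEquiv_symm_apply_last]

theorem delete_last_bijection_T2_general (n : ℕ) :
    ∃ e : {σ : Equiv.Perm (Fin (n + 1)) // σ (Fin.last n) = Fin.last n ∧ AvoidsT2 σ} ≃
          {π : Equiv.Perm (Fin n) // ¬ Contains π ![2,0,1]},
      ∀ (σ : {σ : Equiv.Perm (Fin (n + 1)) // σ (Fin.last n) = Fin.last n ∧ AvoidsT2 σ})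
        (i : Fin n),
        (((e σ : Equiv.Perm (Fin n)) i : ℕ)) =
          (((σ : Equiv.Perm (Fin (n + 1))) i.castSucc : ℕ)) := by
  set restrict := (Perm.extendLastEquiv n).symm
  have hσπ (σ : {σ : Perm (Fin (n + 1)) // σ (last n) = last n}) (i : Fin n) :
      σ.1 i.castSucc = (restrict σ i).castSucc := by
    simpa [restrict] using Perm.extendLastEquiv_apply_castSucc (restrict σ) i
  refine ⟨(subtypeSubtypeEquivSubtypeInter _ _).symm.trans
    (restrict.subtypeEquiv fun σ => avoidsT2_iff_not_contains_312 (hσπ σ) σ.2),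
    fun σ i => congrArg Fin.val (hσπ _ i).symm⟩

/-- Deleting the last symbol is a bijection between permutations of `[n+1]`
avoiding `T₂ = {3124, 3142, 4123, 4132}` ending with the maximum symbol, and
permutations of `[n]` avoiding `312`. -/
theorem delete_last_bijection_T2 (n : ℕ) (hn : 1 ≤ n) :
    ∃ e : {σ : Equiv.Perm (Fin (n + 1)) // σ (Fin.last n) = Fin.last n ∧ AvoidsT2 σ} ≃
          {π : Equiv.Perm (Fin n) // ¬ Contains π ![2,0,1]},
      ∀ (σ : {σ : Equiv.Perm (Fin (n + 1)) // σ (Fin.last n) = Fin.last n ∧ AvoidsT2 σ})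
        (i : Fin n),
        (((e σ : Equiv.Perm (Fin n)) i : ℕ)) =
          (((σ : Equiv.Perm (Fin (n + 1))) i.castSucc : ℕ)) :=
  delete_last_bijection_T2_general n
end

section
/- For every n ≥ 2, the number of permutations of [n] avoiding all eight patterns 3214, 3241, 4213, 4231, 3124, 3142, 4123, 4132 is n·2^{n-2}. -/
/-- Avoidance of all eight patterns in `T₁ ∪ T₂`. -/
def AvoidsT1T2 {n : ℕ} (σ : Equiv.Perm (Fin n)) : Prop :=
  ¬ Contains σ ![2,1,0,3] ∧ ¬ Contains σ ![2,1,3,0] ∧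
  ¬ Contains σ ![3,1,0,2] ∧ ¬ Contains σ ![3,1,2,0] ∧
  ¬ Contains σ ![2,0,1,3] ∧ ¬ Contains σ ![2,0,3,1] ∧
  ¬ Contains σ ![3,0,1,2] ∧ ¬ Contains σ ![3,0,2,1]

/-!
An entry `a` followed by some `b < a` starts a `T₁ ∪ T₂`-pattern as soon as, among two later
entries, one lies below `a` and one above `b`. Hence a leading entry `0` or `1` takes part in no
such pattern, and deleting it leaves an arbitrary avoider of length `n - 1`. If the leading entry
is at least `2`, the permutation avoids `T₁ ∪ T₂` exactly when it ends with the values `0, 1` and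
its other entries form a unimodal arrangement of `2, …, n - 1`; as the minimum `2` of such an
arrangement sits at one of its two ends, there are `2 ^ (n - 2)` of these. So the number `c n` of
avoiders satisfies `c (n + 1) = 2 c n + 2 ^ (n - 1)`, and `c 2 = 2`.
-/

open Equiv Function

theorem Nat.card_subtype_eq_mul_of_bijective {α β γ : Type*} {f : β × γ → α} (hf : Bijective f)
    {P : α → Prop} {Q : β → Prop} {R : γ → Prop} (h : ∀ b c, P (f (b, c)) ↔ Q b ∧ R c) :
    Nat.card {a // P a} = Nat.card {b // Q b} * Nat.card {c // R c} := by
  rw [← Nat.card_prod, ← Nat.card_congr Equiv.subtypeProdEquivProd]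
  exact (Nat.card_congr ((Equiv.ofBijective f hf).subtypeEquiv fun x => (h x.1 x.2).symm)).symm

theorem Nat.card_subtype_eq_add_and_not {α : Type*} [Finite α] (P Q : α → Prop) :
    Nat.card {a // P a} = Nat.card {a // P a ∧ Q a} + Nat.card {a // P a ∧ ¬ Q a} := by
  classical
  rw [← Nat.card_congr (Equiv.sumCompl fun a : {a // P a} => Q a), Nat.card_sum,
    Nat.card_congr (Equiv.subtypeSubtypeEquivSubtypeInter P Q),
    Nat.card_congr (Equiv.subtypeSubtypeEquivSubtypeInter P (¬ Q ·))]

theorem Fin.val_succAbove {n : ℕ} (p : Fin (n + 1)) (i : Fin n) :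
    (p.succAbove i : ℕ) = if (i : ℕ) < p then (i : ℕ) else (i : ℕ) + 1 := by
  unfold Fin.succAbove
  split_ifs <;> simp_all [Fin.lt_def]

theorem Fin.card_val_eq_or_val_eq {n a b : ℕ} (ha : a < n) (hb : b < n) (hab : a ≠ b) :
    Nat.card {p : Fin n // (p : ℕ) = a ∨ (p : ℕ) = b} = 2 := by
  rw [← Set.ncard_pair (show (⟨a, ha⟩ : Fin n) ≠ ⟨b, hb⟩ by simpa), ← Nat.card_coe_set_eq]
  exact Nat.card_congr (Equiv.subtypeEquivRight fun p => by simp [Fin.ext_iff])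

theorem Fin.card_val_lt {n k : ℕ} (h : k ≤ n) : Nat.card {p : Fin n // (p : ℕ) < k} = k := by
  rw [← Nat.card_congr (Fin.castLEquiv h), Nat.card_eq_fintype_card, Fintype.card_fin]

theorem Equiv.Perm.two_le_apply_of_ne {n : ℕ} {σ : Perm (Fin n)} {u w x : Fin n} (huw : u ≠ w)
    (hu : (σ u : ℕ) < 2) (hw : (σ w : ℕ) < 2) (hxu : x ≠ u) (hxw : x ≠ w) : 2 ≤ (σ x : ℕ) := by
  have := σ.injective.ne huw
  have := σ.injective.ne hxu
  have := σ.injective.ne hxw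
  omega

/-- The permutation mapping `p` to `a` and order-isomorphic to `τ` on the remaining positions. -/
def insertPerm {m : ℕ} (p a : Fin (m + 1)) (τ : Perm (Fin m)) : Perm (Fin (m + 1)) :=
  (finSuccEquiv' p).trans ((optionCongr τ).trans (finSuccEquiv' a).symm)

section InsertPerm

variable {m : ℕ}

@[simp]
theorem insertPerm_apply_self (p a : Fin (m + 1)) (τ : Perm (Fin m)) : insertPerm p a τ p = a := by
  simp [insertPerm]

@[simp]
theorem insertPerm_apply_succAbove (p a : Fin (m + 1)) (τ : Perm (Fin m)) (i : Fin m) :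
    insertPerm p a τ (p.succAbove i) = a.succAbove (τ i) := by
  simp [insertPerm]

theorem insertPerm_right_injective (p a : Fin (m + 1)) : Injective (insertPerm p a) := by
  intro τ τ' h
  refine Equiv.ext fun i => ?_
  simpa using congr($h (p.succAbove i))

theorem bijective_insertPerm_fixedPos (p : Fin (m + 1)) :
    Bijective fun x : Fin (m + 1) × Perm (Fin m) => insertPerm p x.1 x.2 := by
  refine (Fintype.bijective_iff_injective_and_card _).2
    ⟨fun ⟨a, τ⟩ ⟨a', τ'⟩ h => ?_, by simp [Fintype.card_perm, Nat.factorial_succ]⟩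
  obtain rfl : a = a' := by simpa using congr($h p)
  exact congrArg _ (insertPerm_right_injective p a h)

theorem bijective_insertPerm_fixedValue (a : Fin (m + 1)) :
    Bijective fun x : Fin (m + 1) × Perm (Fin m) => insertPerm x.1 a x.2 := by
  refine (Fintype.bijective_iff_injective_and_card _).2
    ⟨fun ⟨p, τ⟩ ⟨p', τ'⟩ h => ?_, by simp [Fintype.card_perm, Nat.factorial_succ]⟩
  obtain rfl : p = p' := (insertPerm p a τ).injective <| by
    simp only at h
    rw [insertPerm_apply_self, h, insertPerm_apply_self]
  exact congrArg _ (insertPerm_right_injective p a h)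

end InsertPerm

/-- For distinct `a, b, c, d`, the word `abcd` is order-isomorphic to a pattern of `T₁ ∪ T₂`
iff `a` is one of its two largest and `b` one of its two smallest letters. -/
def InT1T2 {α : Type*} [LinearOrder α] (a b c d : α) : Prop :=
  b < a ∧ (c < a ∨ d < a) ∧ (b < c ∨ b < d)

section Avoidance

variable {n : ℕ} {σ : Perm (Fin n)}

theorem Contains.exists_inT1T2 {τ : Fin 4 → ℕ} (hτ : InT1T2 (τ 0) (τ 1) (τ 2) (τ 3))
    (h : Contains σ τ) :
    ∃ i j k l, i < j ∧ j < k ∧ k < l ∧ InT1T2 (σ i) (σ j) (σ k) (σ l) := by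
  obtain ⟨f, hf, hτf⟩ := h
  exact ⟨f 0, f 1, f 2, f 3, hf (by decide), hf (by decide), hf (by decide), by
    simpa only [InT1T2, hτf] using hτ⟩

theorem contains_of_four {i j k l : Fin n} (hij : i < j) (hjk : j < k) (hkl : k < l)
    {τ : Fin 4 → ℕ} (h : ∀ a b, τ a < τ b ↔ σ (![i, j, k, l] a) < σ (![i, j, k, l] b)) :
    Contains σ τ :=
  ⟨_, Fin.strictMono_iff_lt_succ.2 fun a => by fin_cases a <;> assumption, h⟩

theorem avoidsT1T2_iff :
    AvoidsT1T2 σ ↔ ∀ i j k l, i < j → j < k → k < l → ¬ InT1T2 (σ i) (σ j) (σ k) (σ l) := by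
  constructor
  · rintro ⟨h₁, h₂, h₃, h₄, h₅, h₆, h₇, h₈⟩ i j k l hij hjk hkl ⟨hba, hca, hbc⟩
    have hne : ∀ {x y}, x < y → σ x ≠ σ y := fun hxy => σ.injective.ne hxy.ne
    have occ := @contains_of_four n σ i j k l hij hjk hkl
    rcases lt_or_gt_of_ne (hne hkl) with hcd | hdc
    · rcases lt_or_gt_of_ne (hne (hij.trans (hjk.trans hkl))) with had | hda <;>
        rcases lt_or_gt_of_ne (hne hjk) with hbc' | hcb
      · exact h₅ (occ fun a b => by
          fin_cases a <;> fin_cases b <;> simp only [Matrix.cons_val, Fin.reduceFinMk] <;> omega)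
      · exact h₁ (occ fun a b => by
          fin_cases a <;> fin_cases b <;> simp only [Matrix.cons_val, Fin.reduceFinMk] <;> omega)
      · exact h₇ (occ fun a b => by
          fin_cases a <;> fin_cases b <;> simp only [Matrix.cons_val, Fin.reduceFinMk] <;> omega)
      · exact h₃ (occ fun a b => by
          fin_cases a <;> fin_cases b <;> simp only [Matrix.cons_val, Fin.reduceFinMk] <;> omega)
    · rcases lt_or_gt_of_ne (hne (hij.trans hjk)) with hac | hca' <;>
        rcases lt_or_gt_of_ne (hne (hjk.trans hkl)) with hbd | hdb
      · exact h₆ (occ fun a b => by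
          fin_cases a <;> fin_cases b <;> simp only [Matrix.cons_val, Fin.reduceFinMk] <;> omega)
      · exact h₂ (occ fun a b => by
          fin_cases a <;> fin_cases b <;> simp only [Matrix.cons_val, Fin.reduceFinMk] <;> omega)
      · exact h₈ (occ fun a b => by
          fin_cases a <;> fin_cases b <;> simp only [Matrix.cons_val, Fin.reduceFinMk] <;> omega)
      · exact h₄ (occ fun a b => by
          fin_cases a <;> fin_cases b <;> simp only [Matrix.cons_val, Fin.reduceFinMk] <;> omega)
  · intro h
    refine ⟨?_, ?_, ?_, ?_, ?_, ?_, ?_, ?_⟩ <;>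
    · intro hc
      obtain ⟨i, j, k, l, hij, hjk, hkl, hocc⟩ := hc.exists_inT1T2 (by simp [InT1T2])
      exact h i j k l hij hjk hkl hocc

end Avoidance

theorem inT1T2_insertPerm_succAbove {m : ℕ} (p a : Fin (m + 1)) (τ : Perm (Fin m))
    (i j k l : Fin m) :
    InT1T2 (insertPerm p a τ (p.succAbove i)) (insertPerm p a τ (p.succAbove j))
      (insertPerm p a τ (p.succAbove k)) (insertPerm p a τ (p.succAbove l)) ↔
      InT1T2 (τ i) (τ j) (τ k) (τ l) := by
  simp only [InT1T2, insertPerm_apply_succAbove, Fin.succAbove_lt_succAbove_iff]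

theorem avoidsT1T2_insertPerm_zero_iff {m : ℕ} {a : Fin (m + 1)} (ha : (a : ℕ) < 2)
    (τ : Perm (Fin m)) : AvoidsT1T2 (insertPerm 0 a τ) ↔ AvoidsT1T2 τ := by
  simp only [avoidsT1T2_iff]
  constructor
  · intro h i j k l hij hjk hkl hocc
    refine h i.succ j.succ k.succ l.succ (by simpa) (by simpa) (by simpa) ?_
    simpa only [← Fin.zero_succAbove, inT1T2_insertPerm_succAbove] using hocc
  · intro h i j k l hij hjk hkl hocc
    induction i using Fin.cases with
    | zero =>
      -- two later entries would have to lie below `a ≤ 1`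
      obtain ⟨hj, hk | hl, -⟩ := hocc <;> rw [insertPerm_apply_self] at *
      · exact hjk.ne ((insertPerm 0 a τ).injective (by omega))
      · exact (hjk.trans hkl).ne ((insertPerm 0 a τ).injective (by omega))
    | succ i =>
      obtain ⟨j, rfl⟩ := Fin.exists_succ_eq.2 (Fin.ne_zero_of_lt hij)
      obtain ⟨k, rfl⟩ := Fin.exists_succ_eq.2 (Fin.ne_zero_of_lt hjk)
      obtain ⟨l, rfl⟩ := Fin.exists_succ_eq.2 (Fin.ne_zero_of_lt hkl)
      refine h i j k l (by simpa using hij) (by simpa using hjk) (by simpa using hkl) ?_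
      simpa only [← Fin.zero_succAbove, inT1T2_insertPerm_succAbove] using hocc

/-- A unimodal (valley-free) arrangement of `2, …, n - 1`, followed by the values `0` and `1`. -/
def IsUnimodalWithLowTail {n : ℕ} (σ : Perm (Fin n)) : Prop :=
  (∀ i : Fin n, n ≤ (i : ℕ) + 2 → (σ i : ℕ) < 2) ∧
    ∀ i j k : Fin n, i < j → j < k → 2 ≤ (σ j : ℕ) → ¬ (σ j < σ i ∧ σ j < σ k)

namespace IsUnimodalWithLowTail

variable {n : ℕ} {σ : Perm (Fin n)}

instance : DecidablePred (IsUnimodalWithLowTail (n := n)) := fun _ => by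
  unfold IsUnimodalWithLowTail
  infer_instance

theorem two_le_apply (h : IsUnimodalWithLowTail σ) {j : Fin n} (hj : (j : ℕ) + 3 ≤ n) :
    2 ≤ (σ j : ℕ) := by
  obtain ⟨u, hu⟩ : ∃ u : Fin n, (u : ℕ) = n - 2 := ⟨⟨n - 2, by omega⟩, rfl⟩
  obtain ⟨w, hw⟩ : ∃ w : Fin n, (w : ℕ) = n - 1 := ⟨⟨n - 1, by omega⟩, rfl⟩
  exact σ.two_le_apply_of_ne (by omega) (h.1 u (by omega)) (h.1 w (by omega)) (by omega)
    (by omega)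

theorem avoidsT1T2 (h : IsUnimodalWithLowTail σ) : AvoidsT1T2 σ :=
  avoidsT1T2_iff.2 fun i j k l hij hjk hkl ⟨hji, _, hjkl⟩ => by
    have hj := h.two_le_apply (j := j) (by omega)
    rcases hjkl with hk | hl
    · exact h.2 i j k hij hjk hj ⟨hji, hk⟩
    · exact h.2 i j l hij (hjk.trans hkl) hj ⟨hji, hl⟩

end IsUnimodalWithLowTail

theorem AvoidsT1T2.isUnimodalWithLowTail {m : ℕ} {σ : Perm (Fin (m + 3))} (hσ : AvoidsT1T2 σ)
    (h0 : 2 ≤ (σ 0 : ℕ)) : IsUnimodalWithLowTail σ := by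
  rw [avoidsT1T2_iff] at hσ
  obtain ⟨u, w, huw, hu, hw⟩ : ∃ u w, u < w ∧ (σ u : ℕ) < 2 ∧ (σ w : ℕ) < 2 := by
    have h₀ : (σ (σ.symm ⟨0, by omega⟩) : ℕ) = 0 := by simp
    have h₁ : (σ (σ.symm ⟨1, by omega⟩) : ℕ) = 1 := by simp
    rcases lt_or_gt_of_ne (σ.symm.injective.ne (show (⟨0, _⟩ : Fin (m + 3)) ≠ ⟨1, _⟩ by simp))
      with h | h
    exacts [⟨_, _, h, by omega, by omega⟩, ⟨_, _, h, by omega, by omega⟩]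
  have hlarge := fun x => σ.two_le_apply_of_ne (x := x) huw.ne hu hw
  have hu0 : 0 < u := Fin.pos_iff_ne_zero.2 (by rintro rfl; omega)
  -- otherwise `σ 0`, `σ u` and the entries at two later positions form an occurrence
  have hu' : m + 1 ≤ (u : ℕ) := by
    by_contra! hum
    obtain ⟨x, hx⟩ : ∃ x : Fin (m + 3), (x : ℕ) = m + 1 := ⟨⟨m + 1, by omega⟩, rfl⟩
    obtain ⟨y, hy⟩ : ∃ y : Fin (m + 3), (y : ℕ) = m + 2 := ⟨Fin.last _, rfl⟩
    by_cases hwy : (w : ℕ) = m + 2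
    · have := hlarge x (by omega) (by omega)
      exact hσ 0 u x w hu0 (by omega) (by omega) ⟨by omega, .inr (by omega), .inl (by omega)⟩
    · have := hlarge y (by omega) (by omega)
      exact hσ 0 u w y hu0 huw (by omega) ⟨by omega, .inl (by omega), .inr (by omega)⟩
  have htail : ∀ i : Fin (m + 3), m + 3 ≤ (i : ℕ) + 2 → (σ i : ℕ) < 2 := by
    intro i hi
    obtain rfl | rfl : i = u ∨ i = w := by omega
    exacts [hu, hw]
  refine ⟨htail, fun i j k hij hjk hj ⟨hji, hjk'⟩ => ?_⟩
  have hkw : k < w := by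
    by_contra! hwk
    have := htail k (by omega)
    omega
  exact hσ i j k w hij hjk hkw ⟨hji, .inr (by omega), .inl hjk'⟩

section InsertTwo

variable {m : ℕ} {p : Fin (m + 4)} {τ : Perm (Fin (m + 3))}

theorem val_insertPerm_two_succAbove (p : Fin (m + 4)) (τ : Perm (Fin (m + 3)))
    (i : Fin (m + 3)) :
    (insertPerm p 2 τ (p.succAbove i) : ℕ) =
      if (τ i : ℕ) < 2 then (τ i : ℕ) else (τ i : ℕ) + 1 := by
  rw [insertPerm_apply_succAbove, Fin.val_succAbove]
  rfl

theorem val_insertPerm_two_self (p : Fin (m + 4)) (τ : Perm (Fin (m + 3))) :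
    (insertPerm p 2 τ p : ℕ) = 2 := by
  rw [insertPerm_apply_self]
  rfl

namespace IsUnimodalWithLowTail

theorem val_le_of_insertPerm_two (h : IsUnimodalWithLowTail (insertPerm p 2 τ)) :
    (p : ℕ) ≤ m + 1 := by
  by_contra! hp
  have := h.1 p (by omega)
  rw [val_insertPerm_two_self] at this
  omega

/-- The minimum `2` of the unimodal part is not a valley, so it sits at one of its ends. -/
theorem val_eq_zero_or_of_insertPerm_two (h : IsUnimodalWithLowTail (insertPerm p 2 τ)) :
    (p : ℕ) = 0 ∨ (p : ℕ) = m + 1 := by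
  have hp := h.val_le_of_insertPerm_two
  by_contra! hp'
  have hσp := val_insertPerm_two_self p τ
  set σ := insertPerm p 2 τ
  obtain ⟨i, hi⟩ : ∃ i : Fin (m + 4), (i : ℕ) = p - 1 := ⟨⟨p - 1, by omega⟩, rfl⟩
  obtain ⟨k, hk⟩ : ∃ k : Fin (m + 4), (k : ℕ) = p + 1 := ⟨⟨p + 1, by omega⟩, rfl⟩
  have := h.two_le_apply (j := i) (by omega)
  have := h.two_le_apply (j := k) (by omega)
  have := σ.injective.ne (show i ≠ p by omega)
  have := σ.injective.ne (show k ≠ p by omega)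
  exact h.2 i p k (by omega) (by omega) (by omega) ⟨by omega, by omega⟩

theorem of_insertPerm_two (h : IsUnimodalWithLowTail (insertPerm p 2 τ)) :
    IsUnimodalWithLowTail τ := by
  have hp := h.val_le_of_insertPerm_two
  refine ⟨fun j hj => ?_, fun i j k hij hjk hj hv => ?_⟩
  · have := h.1 (p.succAbove j) (by rw [Fin.val_succAbove]; split_ifs <;> omega)
    rw [val_insertPerm_two_succAbove] at this
    split_ifs at this <;> omega
  · refine h.2 (p.succAbove i) (p.succAbove j) (p.succAbove k) (by simpa) (by simpa)
      (by rw [val_insertPerm_two_succAbove]; split_ifs <;> omega) ?_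
    simpa using hv

theorem insertPerm_two (hτ : IsUnimodalWithLowTail τ) (hp : (p : ℕ) = 0 ∨ (p : ℕ) = m + 1) :
    IsUnimodalWithLowTail (insertPerm p 2 τ) := by
  have hσp := val_insertPerm_two_self p τ
  set σ := insertPerm p 2 τ
  have htail : ∀ i : Fin (m + 4), m + 4 ≤ (i : ℕ) + 2 → (σ i : ℕ) < 2 := by
    intro i hi
    obtain ⟨j, rfl⟩ := Fin.exists_succAbove_eq (x := i) (y := p) (by omega)
    have hj := Fin.val_succAbove p j
    have := hτ.1 j (by split_ifs at hj <;> omega)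
    rw [val_insertPerm_two_succAbove, if_pos this]
    exact this
  refine ⟨htail, fun i j k hij hjk hj hv => ?_⟩
  by_cases hjp : j = p
  · subst hjp
    have := htail k (by omega)
    omega
  have hip : i ≠ p := by rintro rfl; omega
  have hkp : k ≠ p := by rintro rfl; omega
  obtain ⟨i, rfl⟩ := Fin.exists_succAbove_eq hip
  obtain ⟨j, rfl⟩ := Fin.exists_succAbove_eq hjp
  obtain ⟨k, rfl⟩ := Fin.exists_succAbove_eq hkp
  refine hτ.2 i j k (by simpa using hij) (by simpa using hjk) ?_ (by simpa [σ] using hv)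
  rw [val_insertPerm_two_succAbove] at hj
  split_ifs at hj <;> omega

end IsUnimodalWithLowTail

theorem isUnimodalWithLowTail_insertPerm_two_iff :
    IsUnimodalWithLowTail (insertPerm p 2 τ) ↔
      ((p : ℕ) = 0 ∨ (p : ℕ) = m + 1) ∧ IsUnimodalWithLowTail τ :=
  ⟨fun h => ⟨h.val_eq_zero_or_of_insertPerm_two, h.of_insertPerm_two⟩,
    fun h => h.2.insertPerm_two h.1⟩

end InsertTwo

theorem card_isUnimodalWithLowTail (m : ℕ) :
    Nat.card {σ : Perm (Fin (m + 3)) // IsUnimodalWithLowTail σ} = 2 ^ (m + 1) := by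
  induction m with
  | zero =>
    rw [Nat.card_eq_fintype_card]
    decide
  | succ m ih =>
    rw [Nat.card_subtype_eq_mul_of_bijective (bijective_insertPerm_fixedValue 2)
      (Q := fun p => (p : ℕ) = 0 ∨ (p : ℕ) = m + 1) (R := IsUnimodalWithLowTail)
      fun _ _ => isUnimodalWithLowTail_insertPerm_two_iff, ih,
      Fin.card_val_eq_or_val_eq (by omega) (by omega) (by omega)]
    ring

theorem card_avoidsT1T2_add_three (m : ℕ) :
    Nat.card {σ : Perm (Fin (m + 3)) // AvoidsT1T2 σ} =
      2 * Nat.card {τ : Perm (Fin (m + 2)) // AvoidsT1T2 τ} + 2 ^ (m + 1) := by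
  rw [Nat.card_subtype_eq_add_and_not _ fun σ : Perm (Fin (m + 3)) => (σ 0 : ℕ) < 2,
    Nat.card_subtype_eq_mul_of_bijective (bijective_insertPerm_fixedPos 0)
      (Q := fun a => (a : ℕ) < 2) (R := AvoidsT1T2) fun a τ => ?_,
    Fin.card_val_lt (by omega), ← card_isUnimodalWithLowTail m]
  · refine congrArg _ (Nat.card_congr (Equiv.subtypeEquivRight fun σ => ?_))
    exact ⟨fun h => h.1.isUnimodalWithLowTail (by omega),
      fun h => ⟨h.avoidsT1T2, not_lt.2 (h.two_le_apply (by simp))⟩⟩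
  · rw [insertPerm_apply_self]
    exact ⟨fun h => ⟨h.2, (avoidsT1T2_insertPerm_zero_iff h.2 τ).1 h.1⟩,
      fun h => ⟨(avoidsT1T2_insertPerm_zero_iff h.1 τ).2 h.2, h.1⟩⟩

theorem card_avoidsT1T2_add_two (m : ℕ) :
    Nat.card {σ : Perm (Fin (m + 2)) // AvoidsT1T2 σ} = (m + 2) * 2 ^ m := by
  induction m with
  | zero =>
    rw [Nat.card_congr (Equiv.subtypeUnivEquiv fun σ =>
      avoidsT1T2_iff.2 fun i j k l _ _ _ => by omega)]
    simp [Fintype.card_perm]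
  | succ m ih =>
    rw [card_avoidsT1T2_add_three, ih]
    ring

theorem card_avoidsT1T2 (n : ℕ) (hn : 2 ≤ n) :
    Nat.card {σ : Equiv.Perm (Fin n) // AvoidsT1T2 σ} = n * 2 ^ (n - 2) := by
  obtain ⟨m, rfl⟩ := Nat.exists_eq_add_of_le' hn
  simpa using card_avoidsT1T2_add_two m
end

section
/- For every n ≥ 2, the number of connected permutations of [n] avoiding all eight patterns in T₁ ∪ T₂ = {3214, 3241, 4213, 4231, 3124, 3142, 4123, 4132} is 2^{n-1} - 1. -/
def Connected {n : ℕ} (σ : Equiv.Perm (Fin n)) : Prop :=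
  ¬ ∃ l : ℕ, 0 < l ∧ l < n ∧ ∀ i : Fin n, (i : ℕ) < l → ((σ i : ℕ) < l)


/-
Avoiding the eight patterns of `T₁ ∪ T₂` means exactly: whenever `i < j` and `σ j < σ i`, any two
later entries lie both above `σ i` or both below `σ j`. For a connected `σ` of length `m + 2` this
forces `0` into one of the last two positions and makes `σ` increase up to its maximum and
decrease after it, except for the entry `0` when it sits in the penultimate position. So `σ` is
unimodal ending in `0`, or is such a permutation with its last two entries exchanged, the maximum
not being penultimate. A unimodal permutation is determined by the set of values to the left of
its peak, and every set of values not containing the maximum occurs; this gives `2 ^ m` and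
`2 ^ m - 1` permutations of the two kinds.
-/

open Equiv Finset

theorem Finset.natCard_subset {α : Type*} (s : Finset α) :
    Nat.card {t : Finset α // t ⊆ s} = 2 ^ #s := by
  rw [← card_powerset, ← Nat.card_eq_finsetCard]
  exact Nat.card_congr (subtypeEquivRight fun t => mem_powerset.symm)

theorem Finset.natCard_subset_ne {α : Type*} [DecidableEq α] (s : Finset α) :
    Nat.card {t : Finset α // t ⊆ s ∧ t ≠ s} = 2 ^ #s - 1 := by
  rw [← card_powerset, ← card_erase_of_mem (mem_powerset_self s), ← Nat.card_eq_finsetCard]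
  exact Nat.card_congr (subtypeEquivRight fun t => by rw [mem_erase, mem_powerset, and_comm])

theorem Fin.card_filter_lt_le {n : ℕ} (s : Finset (Fin n)) (v : Fin n) :
    #{w ∈ s | w < v} ≤ v :=
  (card_le_card fun w => by simp +contextual).trans (Fin.card_Iio v).le

section SameSide

variable {ι α : Type*} [LinearOrder ι] [LinearOrder α] {f : ι → α}

def SameSideAfterInversions (f : ι → α) : Prop :=
  ∀ ⦃i j k l⦄, i < j → j < k → k < l → f j < f i →
    (f i < f k ∧ f i < f l) ∨ (f k < f j ∧ f l < f j)

namespace SameSideAfterInversions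

theorem of_ne (h : SameSideAfterInversions f) {i j k l : ι} (hij : i < j) (hjk : j < k)
    (hjl : j < l) (hkl : k ≠ l) (hji : f j < f i) :
    (f i < f k ∧ f i < f l) ∨ (f k < f j ∧ f l < f j) := by
  rcases hkl.lt_or_gt with hkl | hlk
  · exact h hij hjk hkl hji
  · simpa only [and_comm] using h hij hjl hlk hji

theorem tail_above_or_below (h : SameSideAfterInversions f) {i j a b : ι} (hij : i < j)
    (hji : f j < f i) (hja : j < a) (hab : a < b) :
    (∀ k, j < k → f i < f k) ∨ (∀ k, j < k → f k < f j) := by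
  have above_or_below : ∀ k, j < k → f i < f k ∨ f k < f j := fun k hjk => by
    obtain ⟨k', hjk', hne⟩ : ∃ k', j < k' ∧ k ≠ k' := by
      by_cases hka : k = a
      · exact ⟨b, hja.trans hab, hka ▸ hab.ne⟩
      · exact ⟨a, hja, hka⟩
    rcases h.of_ne hij hjk hjk' hne hji with ⟨hik, -⟩ | ⟨hkj, -⟩
    exacts [.inl hik, .inr hkj]
  by_contra! ⟨⟨k, hjk, hk_le⟩, ⟨l, hjl, hl_ge⟩⟩
  have hk : f k < f j := (above_or_below k hjk).resolve_left hk_le.not_gt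
  have hl : f i < f l := (above_or_below l hjl).resolve_right hl_ge.not_gt
  rcases h.of_ne hij hjk hjl (by rintro rfl; exact (hk.trans hji).not_gt hl) hji with
    ⟨hik, -⟩ | ⟨-, hlj⟩
  exacts [hk_le.not_gt hik, hl_ge.not_gt hlj]

end SameSideAfterInversions

end SameSide

theorem strictMono_vecCons_four {ι : Type*} [Preorder ι] {i j k l : ι} (hij : i < j)
    (hjk : j < k) (hkl : k < l) : StrictMono ![i, j, k, l] :=
  Fin.strictMono_iff_lt_succ.2 fun a => by fin_cases a <;> assumption

section Patterns

variable {n : ℕ} {σ : Perm (Fin n)}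

theorem not_contains_of_sameSideAfterInversions (h : SameSideAfterInversions σ) {τ : Fin 4 → ℕ}
    (h10 : τ 1 < τ 0) (hnot_above : ¬(τ 0 < τ 2 ∧ τ 0 < τ 3))
    (hnot_below : ¬(τ 2 < τ 1 ∧ τ 3 < τ 1)) : ¬ Contains σ τ := by
  rintro ⟨f, hf, hτ⟩
  rcases h (hf (by decide : (0 : Fin 4) < 1)) (hf (by decide : (1 : Fin 4) < 2))
      (hf (by decide : (2 : Fin 4) < 3)) ((hτ 1 0).1 h10) with ⟨h2, h3⟩ | ⟨h2, h3⟩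
  · exact hnot_above ⟨(hτ 0 2).2 h2, (hτ 0 3).2 h3⟩
  · exact hnot_below ⟨(hτ 2 1).2 h2, (hτ 3 1).2 h3⟩

theorem sameSideAfterInversions_of_avoidsT1T2 (h : AvoidsT1T2 σ) : SameSideAfterInversions σ := by
  obtain ⟨h3214, h3241, h4213, h4231, h3124, h3142, h4123, h4132⟩ := h
  intro i j k l hij hjk hkl hji
  have order_type : ∀ τ : Fin 4 → ℕ, ¬ Contains σ τ →
      ¬ ∀ a b, τ a < τ b ↔ σ (![i, j, k, l] a) < σ (![i, j, k, l] b) :=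
    fun τ hτ hv => hτ ⟨_, strictMono_vecCons_four hij hjk hkl, hv⟩
  have val_ne : ∀ {x y : Fin n}, x ≠ y → (σ x : ℕ) ≠ σ y :=
    fun hxy => Fin.val_injective.ne (σ.injective.ne hxy)
  have := val_ne (hij.trans hjk).ne
  have := val_ne ((hij.trans hjk).trans hkl).ne
  have := val_ne hjk.ne
  have := val_ne (hjk.trans hkl).ne
  have hkl_ne := val_ne hkl.ne
  rw [Fin.lt_def] at hji
  simp only [Fin.lt_def]
  obtain hk | hk | hk :
      σ k < (σ j : ℕ) ∨ (σ j < (σ k : ℕ) ∧ σ k < (σ i : ℕ)) ∨ σ i < (σ k : ℕ) := by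
    omega
  all_goals
    obtain hl | hl | hl :
        σ l < (σ j : ℕ) ∨ (σ j < (σ l : ℕ) ∧ σ l < (σ i : ℕ)) ∨ σ i < (σ l : ℕ) := by
      omega
  -- Two cases are the conclusion; in the others `(σ i, σ j, σ k, σ l)` has one of the patterns.
  all_goals first
    | (left; omega)
    | (right; omega)
    | exfalso
  · refine order_type _ h4213 fun a b => ?_
    fin_cases a <;> fin_cases b <;> simp <;> omega
  · refine order_type _ h3214 fun a b => ?_
    fin_cases a <;> fin_cases b <;> simp <;> omega
  · refine order_type _ h4231 fun a b => ?_
    fin_cases a <;> fin_cases b <;> simp <;> omega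
  · rcases Nat.lt_or_gt_of_ne hkl_ne with _ | _
    · refine order_type _ h4123 fun a b => ?_
      fin_cases a <;> fin_cases b <;> simp <;> omega
    · refine order_type _ h4132 fun a b => ?_
      fin_cases a <;> fin_cases b <;> simp <;> omega
  · refine order_type _ h3124 fun a b => ?_
    fin_cases a <;> fin_cases b <;> simp <;> omega
  · refine order_type _ h3241 fun a b => ?_
    fin_cases a <;> fin_cases b <;> simp <;> omega
  · refine order_type _ h3142 fun a b => ?_
    fin_cases a <;> fin_cases b <;> simp <;> omega

theorem avoidsT1T2_iff_sameSideAfterInversions : AvoidsT1T2 σ ↔ SameSideAfterInversions σ :=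
  ⟨sameSideAfterInversions_of_avoidsT1T2, fun h => by
    refine ⟨?_, ?_, ?_, ?_, ?_, ?_, ?_, ?_⟩ <;>
      exact not_contains_of_sameSideAfterInversions h (by decide) (by decide) (by decide)⟩

end Patterns

section SwapLast

variable {m : ℕ} {x y : Fin (m + 2)}

theorem swap_castSucc_last_apply_of_lt (hx : x < (Fin.last m).castSucc) :
    swap (Fin.last m).castSucc (Fin.last (m + 1)) x = x :=
  swap_apply_of_ne_of_ne hx.ne (hx.trans (Fin.castSucc_lt_last _)).ne

theorem lt_swap_castSucc_last_apply (hx : x < (Fin.last m).castSucc) (hxy : x < y) :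
    x < swap (Fin.last m).castSucc (Fin.last (m + 1)) y := by
  rw [swap_apply_def]
  split_ifs
  exacts [hx.trans (Fin.castSucc_lt_last _), hx, hxy]

theorem SameSideAfterInversions.comp_swap_castSucc_last {α : Type*} [LinearOrder α]
    {f : Fin (m + 2) → α} (h : SameSideAfterInversions f) :
    SameSideAfterInversions (f ∘ swap (Fin.last m).castSucc (Fin.last (m + 1))) := by
  intro i j k l hij hjk hkl hji
  have hj : j < (Fin.last m).castSucc := by
    have := Fin.le_last l
    simp only [Fin.lt_def, Fin.le_def, Fin.val_castSucc, Fin.val_last] at hjk hkl this ⊢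
    omega
  simp only [Function.comp_apply, swap_castSucc_last_apply_of_lt (hij.trans hj),
    swap_castSucc_last_apply_of_lt hj] at hji ⊢
  exact h.of_ne hij (lt_swap_castSucc_last_apply hj hjk)
    (lt_swap_castSucc_last_apply hj (hjk.trans hkl)) ((swap _ _).injective.ne hkl.ne) hji

theorem eq_castSucc_last_and_eq_last (hx : (Fin.last m).castSucc ≤ x) (hxy : x < y) :
    x = (Fin.last m).castSucc ∧ y = Fin.last (m + 1) := by
  have := Fin.le_last y
  simp only [Fin.lt_def, Fin.le_def, Fin.val_castSucc, Fin.val_last] at hx hxy this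
  exact ⟨Fin.ext (by simp; omega), Fin.ext (by simp; omega)⟩

end SwapLast

section Unimodal

variable {ι α : Type*} [LinearOrder ι] [LinearOrder α] {f : ι → α}

def IsUnimodal (f : ι → α) : Prop :=
  ∃ p, StrictMonoOn f (Set.Iic p) ∧ StrictAntiOn f (Set.Ici p)

theorem IsUnimodal.sameSideAfterInversions (h : IsUnimodal f) : SameSideAfterInversions f := by
  obtain ⟨p, hmono, hanti⟩ := h
  intro i j k l hij hjk hkl hji
  have hpj : p < j := by
    by_contra! hjp
    exact (hmono (hij.le.trans hjp) hjp hij).not_gt hji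
  exact .inr ⟨hanti hpj.le (hpj.trans hjk).le hjk,
    hanti hpj.le (hpj.trans (hjk.trans hkl)).le (hjk.trans hkl)⟩

theorem apply_le_apply_of_strictMonoOn_strictAntiOn {p : ι} (hmono : StrictMonoOn f (Set.Iic p))
    (hanti : StrictAntiOn f (Set.Ici p)) (x : ι) : f x ≤ f p := by
  rcases lt_trichotomy x p with hxp | rfl | hpx
  · exact (hmono hxp.le le_rfl hxp).le
  · rfl
  · exact (hanti le_rfl hpx.le hpx).le

theorem IsUnimodal.strictMonoOn_strictAntiOn_symm_last {N : ℕ} {τ : Perm (Fin (N + 1))}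
    (h : IsUnimodal τ) :
    StrictMonoOn τ (Set.Iic (τ.symm (Fin.last N))) ∧
      StrictAntiOn τ (Set.Ici (τ.symm (Fin.last N))) := by
  obtain ⟨p, hmono, hanti⟩ := h
  have hp : τ p = Fin.last N := le_antisymm (Fin.le_last _) <| by
    simpa using apply_le_apply_of_strictMonoOn_strictAntiOn hmono hanti (τ.symm (Fin.last N))
  rw [← hp, τ.symm_apply_apply]
  exact ⟨hmono, hanti⟩

end Unimodal

section Pigeonhole

variable {n : ℕ} {σ : Perm (Fin n)}

theorem le_apply_of_forall_apply_lt {l : ℕ} (h : ∀ i : Fin n, (i : ℕ) < l → (σ i : ℕ) < l)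
    {i : Fin n} (hi : l ≤ i) : l ≤ σ i := by
  by_contra! hσi
  set s : Finset (Fin n) := {x | (x : ℕ) < l}
  have hcard := card_le_card_of_injOn σ (s := insert i s) (t := s) (fun x hx => by
      simp only [s, coe_insert, coe_filter, mem_univ, true_and, Set.mem_insert_iff,
        Set.mem_ofPred_eq] at hx ⊢
      rcases hx with rfl | hx
      exacts [hσi, h x hx]) σ.injective.injOn
  rw [card_insert_of_notMem (by simp [s]; omega)] at hcard
  omega

theorem val_le_of_forall_lt_apply {q v : Fin n} (h : ∀ k, q < k → v < σ k) : v ≤ q := by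
  have hcard := card_le_card_of_injOn σ.symm (s := Iic v) (t := Iic q) (fun w hw => by
    simp only [coe_Iic, Set.mem_Iic] at hw ⊢
    by_contra! hq
    simpa using hw.trans_lt (h _ hq)) σ.symm.injective.injOn
  rw [Fin.card_Iic, Fin.card_Iic] at hcard
  exact Fin.le_def.2 (by omega)

end Pigeonhole

section Connected

variable {m : ℕ} {σ : Perm (Fin (m + 2))}

theorem Connected.apply_zero_ne_zero (hC : Connected σ) : σ 0 ≠ 0 := fun h0 =>
  hC ⟨1, one_pos, by omega, fun i hi => by
    rw [show i = 0 from Fin.ext (by simpa using hi), h0]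
    simp⟩

theorem Connected.apply_last_ne_last (hC : Connected σ) :
    σ (Fin.last (m + 1)) ≠ Fin.last (m + 1) := fun hl =>
  hC ⟨m + 1, by omega, by omega, fun i hi => Fin.val_lt_last <| by
    rw [← hl]
    exact σ.injective.ne (Fin.ne_of_lt (Fin.lt_def.2 (by simpa using hi)))⟩

/-- If `0` stood at a position `q` before the penultimate one, the largest entry up to `q` would
form an inversion with it; no later entry lies below `0`, so all lie above that entry, and the
prefix ending at `q` would be closed. -/
theorem Connected.castSucc_last_le_symm_zero (hC : Connected σ)
    (hS : SameSideAfterInversions σ) : (Fin.last m).castSucc ≤ σ.symm 0 := by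
  set q := σ.symm 0
  have hq : σ q = 0 := σ.apply_symm_apply 0
  by_contra! hqm
  obtain ⟨i, hiq, hmax⟩ := (Iic q).exists_max_image σ nonempty_Iic
  have hi : 0 < σ i :=
    (Fin.pos_iff_ne_zero.2 hC.apply_zero_ne_zero).trans_le (hmax 0 (by simp))
  have hiq : i < q := lt_of_le_of_ne (mem_Iic.1 hiq) (by rintro rfl; simp [hq] at hi)
  rcases hS.tail_above_or_below hiq (hq ▸ hi) hqm (Fin.castSucc_lt_last _) with hup | hdown
  · have hσi := val_le_of_forall_lt_apply hup
    refine hC ⟨q + 1, by omega, by simp only [Fin.lt_def, Fin.val_castSucc] at hqm; omega,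
      fun k hk => ?_⟩
    have := hmax k (mem_Iic.2 (Fin.le_def.2 (by omega)))
    simp only [Fin.le_def] at this hσi
    omega
  · simpa [hq] using hdown _ (hqm.trans (Fin.castSucc_lt_last _))

theorem Connected.symm_last_lt_last (hC : Connected σ) :
    σ.symm (Fin.last (m + 1)) < Fin.last (m + 1) :=
  Fin.lt_last_iff_ne_last.2 fun h => hC.apply_last_ne_last (σ.symm_apply_eq.1 h).symm

theorem Connected.strictMonoOn_Iic_symm_last (hC : Connected σ)
    (hS : SameSideAfterInversions σ) : StrictMonoOn σ (Set.Iic (σ.symm (Fin.last (m + 1)))) := by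
  set P := σ.symm (Fin.last (m + 1))
  have hP : σ P = Fin.last (m + 1) := σ.apply_symm_apply _
  intro i hi j hj hij
  by_contra! hji
  replace hji : σ j < σ i := lt_of_le_of_ne hji (σ.injective.ne hij.ne')
  have hjP : j < P := lt_of_le_of_ne hj (by rintro rfl; exact (Fin.le_last _).not_gt (hP ▸ hji))
  have hjm : j < (Fin.last m).castSucc := by
    have := hC.symm_last_lt_last
    simp only [Fin.lt_def, Fin.val_castSucc, Fin.val_last] at hjP this ⊢
    omega
  rcases hS.tail_above_or_below hij hji hjm (Fin.castSucc_lt_last _) with hup | hdown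
  · simpa using hup _ (hjm.trans_le (hC.castSucc_last_le_symm_zero hS))
  · exact (Fin.le_last _).not_gt (hP ▸ hdown P hjP)

theorem SameSideAfterInversions.apply_lt_of_symm_last_le (hS : SameSideAfterInversions σ)
    {i j : Fin (m + 2)} (hPi : σ.symm (Fin.last (m + 1)) ≤ i) (hi : i < (Fin.last m).castSucc)
    (hij : i < j) : σ j < σ i := by
  set P := σ.symm (Fin.last (m + 1))
  have hP : σ P = Fin.last (m + 1) := σ.apply_symm_apply _
  have below_peak : ∀ x, P < x → σ x < σ P := fun x hx =>
    hP ▸ Fin.lt_last_iff_ne_last.2 (hP ▸ σ.injective.ne hx.ne')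
  rcases hPi.eq_or_lt with rfl | hPi
  · exact below_peak j hij
  · rcases hS.tail_above_or_below hPi (below_peak i hPi) hi (Fin.castSucc_lt_last _) with
      hup | hdown
    · exact absurd (hup j hij) (hP ▸ (Fin.le_last _).not_gt)
    · exact hdown j hij

end Connected

section Shape

variable {m : ℕ}

def IsUnimodalToZero (τ : Perm (Fin (m + 2))) : Prop :=
  IsUnimodal τ ∧ τ (Fin.last (m + 1)) = 0

def ConnectedT1T2Shape (σ : Perm (Fin (m + 2))) : Prop :=
  IsUnimodalToZero σ ∨
    (IsUnimodalToZero (σ * swap (Fin.last m).castSucc (Fin.last (m + 1))) ∧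
      σ (Fin.last (m + 1)) ≠ Fin.last (m + 1))

variable {σ : Perm (Fin (m + 2))}

theorem connected_of_apply_last_eq_zero (h0 : σ (Fin.last (m + 1)) = 0) : Connected σ := by
  rintro ⟨l, hl0, hln, hclosed⟩
  have := le_apply_of_forall_apply_lt hclosed (i := Fin.last (m + 1)) (by simp; omega)
  simp [h0] at this
  omega

theorem connected_of_apply_castSucc_last_eq_zero (h0 : σ (Fin.last m).castSucc = 0)
    (hlast : σ (Fin.last (m + 1)) ≠ Fin.last (m + 1)) : Connected σ := by
  rintro ⟨l, hl0, hln, hclosed⟩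
  have hml : m < l := by
    by_contra! hlm
    have := le_apply_of_forall_apply_lt hclosed (i := (Fin.last m).castSucc) (by simpa using hlm)
    simp [h0] at this
    omega
  have := le_apply_of_forall_apply_lt hclosed (i := Fin.last (m + 1)) (by simp; omega)
  exact hlast (Fin.ext (by have := (σ (Fin.last (m + 1))).isLt; simp; omega))

theorem ConnectedT1T2Shape.sameSideAfterInversions_and_connected (h : ConnectedT1T2Shape σ) :
    SameSideAfterInversions σ ∧ Connected σ := by
  rcases h with ⟨hU, h0⟩ | ⟨⟨hU, h0⟩, hlast⟩
  · exact ⟨hU.sameSideAfterInversions, connected_of_apply_last_eq_zero h0⟩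
  · refine ⟨?_, connected_of_apply_castSucc_last_eq_zero (by simpa using h0) hlast⟩
    simpa [Function.comp_def] using hU.sameSideAfterInversions.comp_swap_castSucc_last

theorem SameSideAfterInversions.connectedT1T2Shape (hS : SameSideAfterInversions σ)
    (hC : Connected σ) : ConnectedT1T2Shape σ := by
  set P := σ.symm (Fin.last (m + 1))
  have hmono := hC.strictMonoOn_Iic_symm_last hS
  have zero_lt : ∀ {τ : Perm (Fin (m + 2))} {x y}, τ y = 0 → x ≠ y → τ y < τ x :=
    fun {τ x y} hy hxy => hy ▸ Fin.pos_iff_ne_zero.2 (hy ▸ τ.injective.ne hxy)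
  rcases (hC.castSucc_last_le_symm_zero hS).eq_or_lt with hq | hq
  · have h0 : σ (Fin.last m).castSucc = 0 := by rw [hq, σ.apply_symm_apply]
    have hP : P < (Fin.last m).castSucc := by
      refine lt_of_le_of_ne (Fin.le_castSucc_iff.2 (by simpa using hC.symm_last_lt_last)) ?_
      exact fun h => absurd (congrArg σ h) (by simp [P, h0])
    have fixes : ∀ x, x < (Fin.last m).castSucc →
        (σ * swap (Fin.last m).castSucc (Fin.last (m + 1))) x = σ x := fun x hx => by
      rw [Perm.mul_apply, swap_castSucc_last_apply_of_lt hx]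
    refine .inr ⟨⟨⟨P, hmono.congr fun x hx => (fixes x (lt_of_le_of_lt hx hP)).symm, ?_⟩,
      by simpa using h0⟩, hC.apply_last_ne_last⟩
    intro x hx y hy hxy
    rcases lt_or_ge x (Fin.last m).castSucc with hxm | hxm
    · rw [fixes x hxm]
      exact hS.apply_lt_of_symm_last_le hx hxm (lt_swap_castSucc_last_apply hxm hxy)
    · obtain ⟨rfl, rfl⟩ := eq_castSucc_last_and_eq_last hxm hxy
      exact zero_lt (by simpa using h0) (Fin.castSucc_lt_last _).ne
  · have h0 : σ (Fin.last (m + 1)) = 0 := by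
      rw [← le_antisymm (Fin.le_last _) (by simpa using Fin.castSucc_lt_iff_succ_le.1 hq),
        σ.apply_symm_apply]
    refine .inl ⟨⟨P, hmono, fun x hx y hy hxy => ?_⟩, h0⟩
    rcases lt_or_ge x (Fin.last m).castSucc with hxm | hxm
    · exact hS.apply_lt_of_symm_last_le hx hxm hxy
    · obtain ⟨rfl, rfl⟩ := eq_castSucc_last_and_eq_last hxm hxy
      exact zero_lt h0 (Fin.castSucc_lt_last _).ne

end Shape

section UnimodalCount

variable {N : ℕ}

def leftOfPeak (τ : Perm (Fin (N + 1))) : Finset (Fin (N + 1)) :=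
  {v | τ.symm v < τ.symm (Fin.last N)}

/-- The position of `v` in the unimodal permutation with `L` the set of values left of its peak:
the smaller values of `L` precede `v`, and a value outside `L` is followed by the smaller values
outside `L`. -/
def unimodalPos (L : Finset (Fin (N + 1))) (v : Fin (N + 1)) : ℕ :=
  if v ∈ L then #{w ∈ L | w < v} else N - #{w ∈ Lᶜ | w < v}

theorem card_leftOfPeak (τ : Perm (Fin (N + 1))) :
    #(leftOfPeak τ) = τ.symm (Fin.last N) := by
  have : leftOfPeak τ = (Iio (τ.symm (Fin.last N))).map τ.toEmbedding := by
    ext v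
    simp [leftOfPeak, mem_map_equiv]
  rw [this, card_map, Fin.card_Iio]

theorem IsUnimodal.symm_apply_eq_unimodalPos {τ : Perm (Fin (N + 1))} (h : IsUnimodal τ)
    (v : Fin (N + 1)) : (τ.symm v : ℕ) = unimodalPos (leftOfPeak τ) v := by
  obtain ⟨hmono, hanti⟩ := h.strictMonoOn_strictAntiOn_symm_last
  rw [unimodalPos]
  split_ifs with hv <;> simp only [leftOfPeak, mem_filter, mem_univ, true_and] at hv
  · have : {w ∈ leftOfPeak τ | w < v} = (Iio (τ.symm v)).map τ.toEmbedding := by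
      ext w
      simp only [leftOfPeak, mem_filter, mem_univ, true_and, mem_map_equiv, mem_Iio]
      have hσ := hmono.lt_iff_lt (a := τ.symm w) (b := τ.symm v)
      simp only [apply_symm_apply, Set.mem_Iic] at hσ
      exact ⟨fun ⟨hw, hwv⟩ => (hσ hw.le hv.le).1 hwv,
        fun hwv => ⟨hwv.trans hv, (hσ (hwv.trans hv).le hv.le).2 hwv⟩⟩
    rw [this, card_map, Fin.card_Iio]
  · have : {w ∈ (leftOfPeak τ)ᶜ | w < v} = (Ioi (τ.symm v)).map τ.toEmbedding := by
      ext w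
      simp only [leftOfPeak, mem_filter, mem_compl, mem_univ, true_and, not_lt, mem_map_equiv,
        mem_Ioi]
      have hσ := hanti.lt_iff_gt (a := τ.symm w) (b := τ.symm v)
      simp only [apply_symm_apply, Set.mem_Ici] at hσ
      rw [not_lt] at hv
      exact ⟨fun ⟨hw, hwv⟩ => (hσ hw hv).1 hwv,
        fun hvw => ⟨hv.trans hvw.le, (hσ (hv.trans hvw.le) hv).2 hvw⟩⟩
    rw [this, card_map, Fin.card_Ioi]
    have := (τ.symm v).isLt
    omega

theorem IsUnimodal.ext {τ τ' : Perm (Fin (N + 1))} (h : IsUnimodal τ) (h' : IsUnimodal τ')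
    (hL : leftOfPeak τ = leftOfPeak τ') : τ = τ' :=
  symm_bijective.injective <| Equiv.ext fun v => Fin.ext <| by
    rw [h.symm_apply_eq_unimodalPos, h'.symm_apply_eq_unimodalPos, hL]

variable (L : Finset (Fin (N + 1))) {v : Fin (N + 1)}

theorem unimodalPos_lt_card (hv : v ∈ L) : unimodalPos L v < #L := by
  rw [unimodalPos, if_pos hv]
  exact card_lt_card (filter_ssubset.2 ⟨v, hv, lt_irrefl v⟩)

theorem card_le_unimodalPos (hv : v ∉ L) : #L ≤ unimodalPos L v := by
  rw [unimodalPos, if_neg hv]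
  have : #{w ∈ Lᶜ | w < v} < #Lᶜ :=
    card_lt_card (filter_ssubset.2 ⟨v, mem_compl.2 hv, lt_irrefl v⟩)
  rw [card_compl, Fintype.card_fin] at this
  omega

theorem unimodalPos_le (v : Fin (N + 1)) : unimodalPos L v ≤ N := by
  rw [unimodalPos]
  split_ifs
  · have := Fin.card_filter_lt_le L v
    have := v.isLt
    omega
  · omega

theorem strictMonoOn_unimodalPos : StrictMonoOn (unimodalPos L) L := by
  intro v hv w hw hvw
  simp only [mem_coe] at hv hw
  simp only [unimodalPos, if_pos hv, if_pos hw]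
  refine card_lt_card ((ssubset_iff_of_subset fun x => ?_).2 ⟨v, ?_⟩)
  · simp +contextual [lt_trans _ hvw]
  · simp [hv, hvw]

theorem strictAntiOn_unimodalPos : StrictAntiOn (unimodalPos L) ↑Lᶜ := by
  intro v hv w hw hvw
  simp only [coe_compl, Set.mem_compl_iff, mem_coe] at hv hw
  simp only [unimodalPos, if_neg hv, if_neg hw]
  have hlt := card_lt_card ((ssubset_iff_of_subset (s₁ := {x ∈ Lᶜ | x < v})
    (s₂ := {x ∈ Lᶜ | x < w}) fun x => ?_).2 ⟨v, ?_⟩)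
  · have := Fin.card_filter_lt_le Lᶜ w
    have := w.isLt
    omega
  · simp +contextual [lt_trans _ hvw]
  · simp [hv, hvw]

theorem unimodalPos_injective : Function.Injective (unimodalPos L) := by
  intro v w h
  by_cases hv : v ∈ L <;> by_cases hw : w ∈ L
  · exact (strictMonoOn_unimodalPos L).injOn hv hw h
  · exact absurd h ((unimodalPos_lt_card L hv).trans_le (card_le_unimodalPos L hw)).ne
  · exact absurd h ((unimodalPos_lt_card L hw).trans_le (card_le_unimodalPos L hv)).ne'
  · exact (strictAntiOn_unimodalPos L).injOn (by simpa using hv) (by simpa using hw) h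

noncomputable def unimodalPerm : Perm (Fin (N + 1)) :=
  (Equiv.ofBijective (fun v => (⟨unimodalPos L v, Nat.lt_succ_of_le (unimodalPos_le L v)⟩ :
    Fin (N + 1))) (Finite.injective_iff_bijective.1 fun _ _ h =>
      unimodalPos_injective L (congrArg Fin.val h))).symm

theorem unimodalPerm_symm_apply (v : Fin (N + 1)) :
    ((unimodalPerm L).symm v : ℕ) = unimodalPos L v := by
  simp [unimodalPerm]

variable {L}

theorem unimodalPos_lt_unimodalPos_last_iff (hL : Fin.last N ∉ L) :
    unimodalPos L v < unimodalPos L (Fin.last N) ↔ v ∈ L := by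
  refine ⟨fun h => ?_, fun hv => (unimodalPos_lt_card L hv).trans_le (card_le_unimodalPos L hL)⟩
  by_contra hv
  rcases (Fin.le_last v).eq_or_lt with rfl | hlt
  · exact lt_irrefl _ h
  · exact (strictAntiOn_unimodalPos L (by simpa using hv) (by simpa using hL) hlt).asymm h

theorem strictMonoOn_insert_last_unimodalPos (hL : Fin.last N ∉ L) :
    StrictMonoOn (unimodalPos L) ↑(insert (Fin.last N) L) := by
  intro v hv w hw hvw
  simp only [coe_insert, Set.mem_insert_iff, mem_coe] at hv hw
  rcases hw with rfl | hw
  · exact (unimodalPos_lt_unimodalPos_last_iff hL).2 (hv.resolve_left hvw.ne)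
  · rcases hv with rfl | hv
    · exact absurd hvw (Fin.le_last w).not_gt
    · exact strictMonoOn_unimodalPos L hv hw hvw

theorem leftOfPeak_unimodalPerm (hL : Fin.last N ∉ L) : leftOfPeak (unimodalPerm L) = L := by
  ext v
  simp [leftOfPeak, Fin.lt_def, unimodalPerm_symm_apply, unimodalPos_lt_unimodalPos_last_iff hL]

theorem isUnimodal_unimodalPerm (hL : Fin.last N ∉ L) : IsUnimodal (unimodalPerm L) := by
  set τ := unimodalPerm L
  have hpos : ∀ x : Fin (N + 1), (x : ℕ) = unimodalPos L (τ x) := fun x => by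
    rw [← unimodalPerm_symm_apply, symm_apply_apply]
  have hpeak : (τ.symm (Fin.last N) : ℕ) = unimodalPos L (Fin.last N) :=
    unimodalPerm_symm_apply L _
  refine ⟨τ.symm (Fin.last N), fun x hx y hy hxy => ?_, fun x hx y hy hxy => ?_⟩
  · have mem : ∀ z, z ≤ τ.symm (Fin.last N) → τ z ∈ insert (Fin.last N) L := fun z hz => by
      by_contra hz'
      rw [mem_insert, not_or] at hz'
      have := strictAntiOn_unimodalPos L (by simpa using hz'.2) (by simpa using hL)
        (Fin.lt_last_iff_ne_last.2 hz'.1)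
      rw [Fin.le_def, hpos z] at hz
      omega
    refine ((strictMonoOn_insert_last_unimodalPos hL).lt_iff_lt (mem x hx) (mem y hy)).1 ?_
    rw [← hpos, ← hpos]
    exact hxy
  · have mem : ∀ z, τ.symm (Fin.last N) ≤ z → τ z ∈ Lᶜ := fun z hz => by
      rw [mem_compl, ← unimodalPos_lt_unimodalPos_last_iff hL, ← hpos, ← hpeak, not_lt]
      exact hz
    refine ((strictAntiOn_unimodalPos L).lt_iff_gt (by simpa using mem x hx)
      (by simpa using mem y hy)).1 ?_
    rw [← hpos, ← hpos]
    exact hxy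

theorem last_notMem_leftOfPeak (τ : Perm (Fin (N + 1))) : Fin.last N ∉ leftOfPeak τ := by
  simp [leftOfPeak]

noncomputable def unimodalEquiv :
    {τ : Perm (Fin (N + 1)) // IsUnimodal τ} ≃ {L : Finset (Fin (N + 1)) // Fin.last N ∉ L} where
  toFun τ := ⟨leftOfPeak τ.1, last_notMem_leftOfPeak τ.1⟩
  invFun L := ⟨unimodalPerm L.1, isUnimodal_unimodalPerm L.2⟩
  left_inv τ := Subtype.ext <|
    (isUnimodal_unimodalPerm (last_notMem_leftOfPeak τ.1)).ext τ.2
      (leftOfPeak_unimodalPerm (last_notMem_leftOfPeak τ.1))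
  right_inv L := Subtype.ext (leftOfPeak_unimodalPerm L.2)

theorem card_isUnimodal_and_leftOfPeak (Q : Finset (Fin (N + 1)) → Prop) :
    Nat.card {τ : Perm (Fin (N + 1)) // IsUnimodal τ ∧ Q (leftOfPeak τ)} =
      Nat.card {L : Finset (Fin (N + 1)) // Fin.last N ∉ L ∧ Q L} :=
  Nat.card_congr <| (subtypeSubtypeEquivSubtypeInter _ _).symm.trans <|
    (unimodalEquiv.subtypeEquiv fun _ => Iff.rfl).trans (subtypeSubtypeEquivSubtypeInter _ Q)

end UnimodalCount

section UnimodalToZeroCount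

variable {m : ℕ}

theorem IsUnimodal.apply_last_eq_zero_iff {τ : Perm (Fin (m + 2))} (h : IsUnimodal τ) :
    τ (Fin.last (m + 1)) = 0 ↔ 0 ∉ leftOfPeak τ := by
  have := h.symm_apply_eq_unimodalPos 0
  rw [← Equiv.eq_symm_apply, Fin.ext_iff, this, unimodalPos]
  split_ifs <;> simp_all

theorem apply_castSucc_last_eq_last_iff (τ : Perm (Fin (m + 2))) :
    τ (Fin.last m).castSucc = Fin.last (m + 1) ↔ #(leftOfPeak τ) = m := by
  rw [card_leftOfPeak, ← Equiv.eq_symm_apply, Fin.ext_iff, eq_comm]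
  simp

theorem subset_compl_zero_last_iff (L : Finset (Fin (m + 2))) :
    L ⊆ {0, Fin.last (m + 1)}ᶜ ↔ Fin.last (m + 1) ∉ L ∧ 0 ∉ L := by
  rw [subset_compl_iff_disjoint_right, disjoint_insert_right, disjoint_singleton_right, and_comm]

theorem card_compl_zero_last : #({0, Fin.last (m + 1)}ᶜ : Finset (Fin (m + 2))) = m := by
  rw [card_compl, card_pair (Fin.last_pos.ne)]
  simp

theorem card_isUnimodalToZero :
    Nat.card {τ : Perm (Fin (m + 2)) // IsUnimodalToZero τ} = 2 ^ m := by
  have (τ : Perm (Fin (m + 2))) : IsUnimodalToZero τ ↔ IsUnimodal τ ∧ 0 ∉ leftOfPeak τ :=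
    and_congr_right fun h => h.apply_last_eq_zero_iff
  rw [Nat.card_congr (subtypeEquivRight this), card_isUnimodal_and_leftOfPeak (0 ∉ ·)]
  calc _ = Nat.card {L : Finset (Fin (m + 2)) // L ⊆ {0, Fin.last (m + 1)}ᶜ} :=
        Nat.card_congr (subtypeEquivRight fun L => (subset_compl_zero_last_iff L).symm)
    _ = 2 ^ m := by rw [natCard_subset, card_compl_zero_last]

theorem card_isUnimodalToZero_apply_castSucc_last_ne :
    Nat.card {τ : Perm (Fin (m + 2)) //
      IsUnimodalToZero τ ∧ τ (Fin.last m).castSucc ≠ Fin.last (m + 1)} = 2 ^ m - 1 := by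
  have (τ : Perm (Fin (m + 2))) :
      (IsUnimodalToZero τ ∧ τ (Fin.last m).castSucc ≠ Fin.last (m + 1)) ↔
        IsUnimodal τ ∧ (0 ∉ leftOfPeak τ ∧ #(leftOfPeak τ) ≠ m) := by
    rw [IsUnimodalToZero, and_assoc]
    exact and_congr_right fun h => and_congr h.apply_last_eq_zero_iff
      (apply_castSucc_last_eq_last_iff τ).not
  rw [Nat.card_congr (subtypeEquivRight this),
    card_isUnimodal_and_leftOfPeak fun L => 0 ∉ L ∧ #L ≠ m]
  calc _ = Nat.card {L : Finset (Fin (m + 2)) //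
        L ⊆ {0, Fin.last (m + 1)}ᶜ ∧ L ≠ {0, Fin.last (m + 1)}ᶜ} := by
        refine Nat.card_congr (subtypeEquivRight fun L => ?_)
        rw [← and_assoc, ← subset_compl_zero_last_iff]
        refine and_congr_right fun hL => not_congr ⟨fun h => ?_, fun h => ?_⟩
        · exact eq_of_subset_of_card_le hL (by rw [h, card_compl_zero_last])
        · rw [h, card_compl_zero_last]
    _ = 2 ^ m - 1 := by rw [natCard_subset_ne, card_compl_zero_last]

end UnimodalToZeroCount

theorem card_connectedT1T2Shape (m : ℕ) :
    Nat.card {σ : Perm (Fin (m + 2)) // ConnectedT1T2Shape σ} = 2 ^ (m + 1) - 1 := by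
  classical
  have hdisj : Disjoint (IsUnimodalToZero (m := m)) fun σ =>
      IsUnimodalToZero (σ * swap (Fin.last m).castSucc (Fin.last (m + 1))) ∧
        σ (Fin.last (m + 1)) ≠ Fin.last (m + 1) := by
    refine Pi.disjoint_iff.2 fun σ => Prop.disjoint_iff.2 fun ⟨⟨_, h0⟩, ⟨_, h0'⟩, _⟩ => ?_
    rw [Perm.mul_apply, swap_apply_right, ← h0] at h0'
    exact (Fin.castSucc_lt_last _).ne (σ.injective h0')
  have hswap : {σ : Perm (Fin (m + 2)) //
      IsUnimodalToZero (σ * swap (Fin.last m).castSucc (Fin.last (m + 1))) ∧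
        σ (Fin.last (m + 1)) ≠ Fin.last (m + 1)} ≃
      {τ : Perm (Fin (m + 2)) //
        IsUnimodalToZero τ ∧ τ (Fin.last m).castSucc ≠ Fin.last (m + 1)} :=
    (Equiv.mulRight (swap (Fin.last m).castSucc (Fin.last (m + 1)))).subtypeEquiv fun σ => by
      simp [Perm.mul_apply]
  rw [show Nat.card {σ // ConnectedT1T2Shape σ} = _ from
      (Nat.card_congr (subtypeOrEquiv _ _ hdisj)).trans Nat.card_sum,
    Nat.card_congr hswap, card_isUnimodalToZero, card_isUnimodalToZero_apply_castSucc_last_ne,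
    pow_succ]
  have := Nat.one_le_two_pow (n := m)
  omega

theorem card_connected_avoidsT1T2 (n : ℕ) (hn : 2 ≤ n) :
    Nat.card {σ : Equiv.Perm (Fin n) // AvoidsT1T2 σ ∧ Connected σ} = 2 ^ (n - 1) - 1 := by
  obtain ⟨m, rfl⟩ : ∃ m, n = m + 2 := ⟨n - 2, by omega⟩
  have (σ : Perm (Fin (m + 2))) : AvoidsT1T2 σ ∧ Connected σ ↔ ConnectedT1T2Shape σ := by
    rw [avoidsT1T2_iff_sameSideAfterInversions]
    exact ⟨fun ⟨hS, hC⟩ => hS.connectedT1T2Shape hC,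
      ConnectedT1T2Shape.sameSideAfterInversions_and_connected⟩
  rw [Nat.card_congr (subtypeEquivRight this), card_connectedT1T2Shape]
  rfl
end

section
/- A connected permutation σ of [n] (n ≥ 2), written σ = α n β where n is the maximum value, avoids all eight patterns in T₁ ∪ T₂ if and only if α is an increasing sequence not containing the symbol 1 and β is nonempty and either decreasing or order-isomorphic to j, j-1, …, 3, 1, 2. -/
set_option maxHeartbeats 1000000

lemma contains_of_quad {n : ℕ} (σ : Equiv.Perm (Fin n)) (τ : Fin 4 → ℕ)
    (p0 p1 p2 p3 : Fin n)
    (hp01 : (p0:ℕ) < p1) (hp12 : (p1:ℕ) < p2) (hp23 : (p2:ℕ) < p3)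
    (hτ : ∀ a b : Fin 4, a ≠ b → τ a ≠ τ b)
    (H01 : τ 0 < τ 1 ↔ (σ p0:ℕ) < σ p1)
    (H02 : τ 0 < τ 2 ↔ (σ p0:ℕ) < σ p2)
    (H03 : τ 0 < τ 3 ↔ (σ p0:ℕ) < σ p3)
    (H12 : τ 1 < τ 2 ↔ (σ p1:ℕ) < σ p2)
    (H13 : τ 1 < τ 3 ↔ (σ p1:ℕ) < σ p3)
    (H23 : τ 2 < τ 3 ↔ (σ p2:ℕ) < σ p3) : Contains σ τ := by
  have key : ∀ (x y : Fin n), (x:ℕ) < y → (σ x:ℕ) ≠ σ y := fun x y hxy he =>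
    absurd (congrArg Fin.val (σ.injective (Fin.val_injective he))) (by omega)
  have d01 := key _ _ hp01
  have d02 := key _ _ (hp01.trans hp12)
  have d03 := key _ _ ((hp01.trans hp12).trans hp23)
  have d12 := key _ _ hp12
  have d13 := key _ _ (hp12.trans hp23)
  have d23 := key _ _ hp23
  have t01 := hτ 0 1 (by decide); have t02 := hτ 0 2 (by decide)
  have t03 := hτ 0 3 (by decide); have t12 := hτ 1 2 (by decide)
  have t13 := hτ 1 3 (by decide); have t23 := hτ 2 3 (by decide)
  refine ⟨![p0,p1,p2,p3], ?_, ?_⟩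
  · intro a b hab
    match a, b with
    | 0, 0 => exact absurd hab (by decide)
    | 0, 1 => exact hp01
    | 0, 2 => exact hp01.trans hp12
    | 0, 3 => exact (hp01.trans hp12).trans hp23
    | 1, 0 => exact absurd hab (by decide)
    | 1, 1 => exact absurd hab (by decide)
    | 1, 2 => exact hp12
    | 1, 3 => exact hp12.trans hp23
    | 2, 0 => exact absurd hab (by decide)
    | 2, 1 => exact absurd hab (by decide)
    | 2, 2 => exact absurd hab (by decide)
    | 2, 3 => exact hp23
    | 3, 0 => exact absurd hab (by decide)
    | 3, 1 => exact absurd hab (by decide)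
    | 3, 2 => exact absurd hab (by decide)
    | 3, 3 => exact absurd hab (by decide)
  · intro a b
    match a, b with
    | 0, 0 => exact iff_of_false (lt_irrefl _) (lt_irrefl _)
    | 0, 1 => exact H01
    | 0, 2 => exact H02
    | 0, 3 => exact H03
    | 1, 0 => exact (by omega : τ 1 < τ 0 ↔ (σ p1:ℕ) < σ p0)
    | 1, 1 => exact iff_of_false (lt_irrefl _) (lt_irrefl _)
    | 1, 2 => exact H12
    | 1, 3 => exact H13
    | 2, 0 => exact (by omega : τ 2 < τ 0 ↔ (σ p2:ℕ) < σ p0)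
    | 2, 1 => exact (by omega : τ 2 < τ 1 ↔ (σ p2:ℕ) < σ p1)
    | 2, 2 => exact iff_of_false (lt_irrefl _) (lt_irrefl _)
    | 2, 3 => exact H23
    | 3, 0 => exact (by omega : τ 3 < τ 0 ↔ (σ p3:ℕ) < σ p0)
    | 3, 1 => exact (by omega : τ 3 < τ 1 ↔ (σ p3:ℕ) < σ p1)
    | 3, 2 => exact (by omega : τ 3 < τ 2 ↔ (σ p3:ℕ) < σ p2)
    | 3, 3 => exact iff_of_false (lt_irrefl _) (lt_irrefl _)

/-- Structure of connected permutations `σ = α n β` avoiding all eight patterns of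
`T₁ ∪ T₂`: writing `m` for the position of the maximum value `t` (and `s` for the
second-to-last position, `t` also denoting the last position via `(t : ℕ) = n-1`),
`σ` avoids all eight patterns iff the prefix `α` (positions before `m`) is increasing
and does not contain the symbol `1` (value `0` here), and the suffix `β` (positions
after `m`) is nonempty and is either decreasing or order-isomorphic to
`j (j-1) … 3 1 2`. -/
theorem connected_avoidsT1T2_structure (n : ℕ) (hn : 2 ≤ n)
    (σ : Equiv.Perm (Fin n)) (hσ : Connected σ)
    (t s : Fin n) (ht : (t : ℕ) = n - 1) (hs : (s : ℕ) = n - 2)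
    (m : Fin n) (hm : σ m = t) :
    AvoidsT1T2 σ ↔
      ((∀ i j : Fin n, i < j → j < m → σ i < σ j) ∧
       (∀ i : Fin n, i < m → σ i ≠ ⟨0, by omega⟩) ∧
       m < t ∧
       ((∀ i j : Fin n, m < i → i < j → σ j < σ i) ∨
        (m < s ∧
         (∀ i j : Fin n, m < i → i < j → j ≠ t → σ j < σ i) ∧
         σ s < σ t ∧
         (∀ i : Fin n, m < i → i < s → σ t < σ i)))) := by
  have hσm : (σ m : ℕ) = n - 1 := by rw [hm, ht]
  have hmax : ∀ x : Fin n, x ≠ m → (σ x : ℕ) < n - 1 := by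
    intro x hx
    have h1 : σ x ≠ t := fun he => hx (σ.injective (by rw [he, hm]))
    have h2 : (σ x : ℕ) ≠ n - 1 := fun he => h1 (Fin.val_injective (by rw [he, ht]))
    have := (σ x).isLt
    omega
  have hmt : m < t := by
    by_contra hcon
    have h1 : (t : ℕ) ≤ (m : ℕ) := not_lt.mp hcon
    exact hσ ⟨n - 1, by omega, by omega,
      fun i hi => hmax i (fun he => by rw [he] at hi; omega)⟩
  have hmtv : (m : ℕ) < n - 1 := by
    have h1 : (m:ℕ) < (t:ℕ) := hmt
    omega
  constructor
  · -- forward direction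
    intro hA
    -- the minimum value of the suffix
    set W : Finset ℕ := (Finset.univ.filter (fun x : Fin n => m < x)).image
      (fun x => (σ x : ℕ)) with hW
    have hWne : W.Nonempty :=
      ⟨(σ t : ℕ), Finset.mem_image_of_mem _ (Finset.mem_filter.mpr ⟨Finset.mem_univ _, hmt⟩)⟩
    set c : ℕ := W.min' hWne with hc
    obtain ⟨q, hqmem, hqval⟩ := Finset.mem_image.mp (W.min'_mem hWne)
    have hmq : m < q := (Finset.mem_filter.mp hqmem).2
    have hmqv : (m : ℕ) < (q : ℕ) := hmq
    have hcmin : ∀ x : Fin n, (m : ℕ) < (x : ℕ) → c ≤ (σ x : ℕ) := fun x hx =>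
      W.min'_le _ (Finset.mem_image_of_mem _ (Finset.mem_filter.mpr ⟨Finset.mem_univ _, hx⟩))
    have hqm : q ≠ m := fun he => by have := congrArg Fin.val he; omega
    have hvq : (σ q : ℕ) < n - 1 := hmax q hqm
    have hinj : ∀ x y : Fin n, (σ x : ℕ) = (σ y : ℕ) → x = y := fun x y he =>
      σ.injective (Fin.val_injective he)
    -- the star property
    have hstar : ∀ i j : Fin n, (i:ℕ) < j → (j:ℕ) < m → c < (σ i : ℕ) →
        (σ j : ℕ) < (σ i : ℕ) → False := by
      intro i j hij hjm hci hji
      have him : i ≠ m := fun he => by have := congrArg Fin.val he; omega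
      have hjm' : j ≠ m := fun he => by have := congrArg Fin.val he; omega
      have hvi := hmax i him
      have hvj := hmax j hjm'
      have hjq : (σ j : ℕ) ≠ (σ q : ℕ) := fun he => by
        have := congrArg Fin.val (hinj _ _ he); omega
      rcases lt_trichotomy (σ j : ℕ) c with h1 | h1 | h1
      · -- pattern 2 0 3 1
        exact hA.2.2.2.2.2.1 (contains_of_quad σ ![2,0,3,1] i j m q hij hjm hmqv
          (by decide)
          ((by omega) : (2:ℕ) < 0 ↔ (σ i:ℕ) < σ j)
          ((by omega) : (2:ℕ) < 3 ↔ (σ i:ℕ) < σ m)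
          ((by omega) : (2:ℕ) < 1 ↔ (σ i:ℕ) < σ q)
          ((by omega) : (0:ℕ) < 3 ↔ (σ j:ℕ) < σ m)
          ((by omega) : (0:ℕ) < 1 ↔ (σ j:ℕ) < σ q)
          ((by omega) : (3:ℕ) < 1 ↔ (σ m:ℕ) < σ q))
      · exact hjq (by omega)
      · -- pattern 2 1 3 0
        exact hA.2.1 (contains_of_quad σ ![2,1,3,0] i j m q hij hjm hmqv
          (by decide)
          ((by omega) : (2:ℕ) < 1 ↔ (σ i:ℕ) < σ j)
          ((by omega) : (2:ℕ) < 3 ↔ (σ i:ℕ) < σ m)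
          ((by omega) : (2:ℕ) < 0 ↔ (σ i:ℕ) < σ q)
          ((by omega) : (1:ℕ) < 3 ↔ (σ j:ℕ) < σ m)
          ((by omega) : (1:ℕ) < 0 ↔ (σ j:ℕ) < σ q)
          ((by omega) : (3:ℕ) < 0 ↔ (σ m:ℕ) < σ q))
    -- every prefix entry is bigger than the suffix minimum
    have hAllBig : ∀ i : Fin n, (i : ℕ) < m → c < (σ i : ℕ) := by
      by_cases hc0 : c = 0
      · intro i hi
        have hiq : (σ i : ℕ) ≠ (σ q : ℕ) := fun he => by
          have := congrArg Fin.val (hinj _ _ he); omega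
        omega
      · exfalso
        -- position of the value 0
        set x0 : Fin n := σ.symm ⟨0, by omega⟩ with hx0
        have hx0v : (σ x0 : ℕ) = 0 := by rw [hx0, Equiv.apply_symm_apply]
        have hx0m : (x0 : ℕ) < m := by
          have h1 : x0 ≠ m := fun he => by rw [he] at hx0v; omega
          have h2 : ¬ ((m:ℕ) < (x0:ℕ)) := fun hh => by have := hcmin x0 hh; omega
          have h3 : (x0:ℕ) ≠ (m:ℕ) := fun he => h1 (Fin.val_injective he)
          omega
        by_cases hex : ∃ i : Fin n, (i : ℕ) < m ∧ c < (σ i : ℕ)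
        · set F : Finset (Fin n) :=
            Finset.univ.filter (fun i : Fin n => (i : ℕ) < m ∧ c < (σ i : ℕ)) with hF
          have hFne : F.Nonempty := by
            obtain ⟨i, h1, h2⟩ := hex
            exact ⟨i, Finset.mem_filter.mpr ⟨Finset.mem_univ _, h1, h2⟩⟩
          set i0 : Fin n := F.min' hFne with hi0
          have hi0mem := Finset.mem_filter.mp (F.min'_mem hFne)
          have hi0m : (i0 : ℕ) < m := hi0mem.2.1
          have hi0c : c < (σ i0 : ℕ) := hi0mem.2.2
          have hminimal : ∀ j : Fin n, (j : ℕ) < (i0 : ℕ) → (σ j : ℕ) < c := by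
            intro j hj
            have h1 : ¬ (c < (σ j : ℕ)) := by
              intro hh
              have : i0 ≤ j := F.min'_le j (Finset.mem_filter.mpr
                ⟨Finset.mem_univ _, by omega, hh⟩)
              have : (i0 : ℕ) ≤ (j : ℕ) := this
              omega
            have h2 : (σ j : ℕ) ≠ (σ q : ℕ) := fun he => by
              have := congrArg Fin.val (hinj _ _ he); omega
            omega
          have hsmallpos : ∀ x : Fin n, (σ x : ℕ) < c → (x : ℕ) < (i0 : ℕ) := by
            intro x hx
            have hxm : x ≠ m := fun he => by rw [he] at hx; omega
            have hxm2 : ¬ ((m:ℕ) < (x:ℕ)) := fun hh => by have := hcmin x hh; omega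
            have hxm3 : (x:ℕ) < (m:ℕ) := by
              have : (x:ℕ) ≠ (m:ℕ) := fun he => hxm (Fin.val_injective he)
              omega
            by_contra hcon
            have h1 : (x:ℕ) ≠ (i0:ℕ) := fun he => by
              have : x = i0 := Fin.val_injective he
              rw [this] at hx; omega
            have h2 : (i0:ℕ) < (x:ℕ) := by omega
            exact hstar i0 x h2 hxm3 hi0c (by omega)
          -- cardinality : c ≤ i0
          have hcard : c ≤ (i0 : ℕ) := by
            have h1 : (Finset.Iio (σ q)).card ≤ (Finset.Iio i0).card := by
              apply Finset.card_le_card_of_injOn (fun y => σ.symm y)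
              · intro y hy
                have hy' : (y : ℕ) < c := by
                  have := Finset.mem_Iio.mp hy; omega
                have : (σ (σ.symm y) : ℕ) < c := by
                  rw [Equiv.apply_symm_apply]; exact hy'
                exact Finset.mem_Iio.mpr (hsmallpos _ this)
              · intro a _ b _ hab
                exact σ.symm.injective hab
            rw [Fin.card_Iio, Fin.card_Iio] at h1
            omega
          have hi0pos : 0 < (i0 : ℕ) := by
            have := hsmallpos x0 (by omega)
            omega
          exact hσ ⟨(i0 : ℕ), hi0pos, i0.isLt, fun i hi => by
            have := hminimal i hi; omega⟩
        · push_neg at hex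
          have hall : ∀ i : Fin n, (i : ℕ) < m → (σ i : ℕ) < c := by
            intro i hi
            have h1 := hex i hi
            have h2 : (σ i : ℕ) ≠ (σ q : ℕ) := fun he => by
              have := congrArg Fin.val (hinj _ _ he); omega
            omega
          have hcard : c ≤ (m : ℕ) := by
            have h1 : (Finset.Iio (σ q)).card ≤ (Finset.Iio m).card := by
              apply Finset.card_le_card_of_injOn (fun y => σ.symm y)
              · intro y hy
                have hy' : (y : ℕ) < c := by
                  have := Finset.mem_Iio.mp hy; omega
                have hvx : (σ (σ.symm y) : ℕ) < c := by
                  rw [Equiv.apply_symm_apply]; exact hy'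
                have hxm : σ.symm y ≠ m := fun he => by rw [he] at hvx; omega
                have hxm2 : ¬ ((m:ℕ) < (σ.symm y : ℕ)) := fun hh => by
                  have := hcmin _ hh; omega
                have : (σ.symm y : ℕ) ≠ (m:ℕ) := fun he => hxm (Fin.val_injective he)
                exact Finset.mem_Iio.mpr (show (σ.symm y : ℕ) < (m:ℕ) by omega)
              · intro a _ b _ hab
                exact σ.symm.injective hab
            rw [Fin.card_Iio, Fin.card_Iio] at h1
            omega
          exact hσ ⟨(m : ℕ), by omega, m.isLt, fun i hi => by
            have := hall i hi; omega⟩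
    refine ⟨?_, ?_, hmt, ?_⟩
    · -- α increasing
      intro i j hij hjm
      have hij' : (i:ℕ) < (j:ℕ) := hij
      have hjm' : (j:ℕ) < (m:ℕ) := hjm
      by_contra hcon
      have h1 : (σ j : ℕ) ≤ (σ i : ℕ) := not_lt.mp hcon
      have h2 : (σ i : ℕ) ≠ (σ j : ℕ) := fun he => by
        have := congrArg Fin.val (hinj _ _ he); omega
      exact hstar i j hij' hjm' (hAllBig i (by omega)) (by omega)
    · -- α has no 0
      intro i him he
      have h1 : (σ i : ℕ) = 0 := congrArg Fin.val he
      have := hAllBig i him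
      omega
    · -- suffix structure
      have hTri : ∀ i j k : Fin n, (m:ℕ) < i → (i:ℕ) < j → (j:ℕ) < k →
          (σ j : ℕ) < (σ i : ℕ) ∧ (σ k : ℕ) < (σ i : ℕ) := by
        intro i j k h1 h2 h3
        have him : i ≠ m := fun he => by have := congrArg Fin.val he; omega
        have hjm : j ≠ m := fun he => by have := congrArg Fin.val he; omega
        have hkm : k ≠ m := fun he => by have := congrArg Fin.val he; omega
        have hvi := hmax i him
        have hvj := hmax j hjm
        have hvk := hmax k hkm
        have dij : (σ i : ℕ) ≠ (σ j : ℕ) := fun he => by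
          have := congrArg Fin.val (hinj _ _ he); omega
        have dik : (σ i : ℕ) ≠ (σ k : ℕ) := fun he => by
          have := congrArg Fin.val (hinj _ _ he); omega
        have djk : (σ j : ℕ) ≠ (σ k : ℕ) := fun he => by
          have := congrArg Fin.val (hinj _ _ he); omega
        have hji : (σ j : ℕ) < (σ i : ℕ) := by
          by_contra hcon
          have hij' : (σ i : ℕ) < (σ j : ℕ) := by omega
          rcases lt_trichotomy (σ k : ℕ) (σ i : ℕ) with hk1 | hk1 | hk1
          · -- order: k < i < j < m : pattern 3 1 2 0
            exact hA.2.2.2.1 (contains_of_quad σ ![3,1,2,0] m i j k h1 h2 h3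
              (by decide)
              ((by omega) : (3:ℕ) < 1 ↔ (σ m:ℕ) < σ i)
              ((by omega) : (3:ℕ) < 2 ↔ (σ m:ℕ) < σ j)
              ((by omega) : (3:ℕ) < 0 ↔ (σ m:ℕ) < σ k)
              ((by omega) : (1:ℕ) < 2 ↔ (σ i:ℕ) < σ j)
              ((by omega) : (1:ℕ) < 0 ↔ (σ i:ℕ) < σ k)
              ((by omega) : (2:ℕ) < 0 ↔ (σ j:ℕ) < σ k))
          · exact dik hk1.symm
          · rcases lt_trichotomy (σ k : ℕ) (σ j : ℕ) with hk2 | hk2 | hk2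
            · -- order: i < k < j : pattern 3 0 2 1
              exact hA.2.2.2.2.2.2.2 (contains_of_quad σ ![3,0,2,1] m i j k h1 h2 h3
                (by decide)
                ((by omega) : (3:ℕ) < 0 ↔ (σ m:ℕ) < σ i)
                ((by omega) : (3:ℕ) < 2 ↔ (σ m:ℕ) < σ j)
                ((by omega) : (3:ℕ) < 1 ↔ (σ m:ℕ) < σ k)
                ((by omega) : (0:ℕ) < 2 ↔ (σ i:ℕ) < σ j)
                ((by omega) : (0:ℕ) < 1 ↔ (σ i:ℕ) < σ k)
                ((by omega) : (2:ℕ) < 1 ↔ (σ j:ℕ) < σ k))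
            · exact djk hk2.symm
            · -- order: i < j < k : pattern 3 0 1 2
              exact hA.2.2.2.2.2.2.1 (contains_of_quad σ ![3,0,1,2] m i j k h1 h2 h3
                (by decide)
                ((by omega) : (3:ℕ) < 0 ↔ (σ m:ℕ) < σ i)
                ((by omega) : (3:ℕ) < 1 ↔ (σ m:ℕ) < σ j)
                ((by omega) : (3:ℕ) < 2 ↔ (σ m:ℕ) < σ k)
                ((by omega) : (0:ℕ) < 1 ↔ (σ i:ℕ) < σ j)
                ((by omega) : (0:ℕ) < 2 ↔ (σ i:ℕ) < σ k)
                ((by omega) : (1:ℕ) < 2 ↔ (σ j:ℕ) < σ k))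
        refine ⟨hji, ?_⟩
        by_contra hcon
        have hik' : (σ i : ℕ) < (σ k : ℕ) := by omega
        -- order: j < i < k : pattern 3 1 0 2
        exact hA.2.2.1 (contains_of_quad σ ![3,1,0,2] m i j k h1 h2 h3
          (by decide)
          ((by omega) : (3:ℕ) < 1 ↔ (σ m:ℕ) < σ i)
          ((by omega) : (3:ℕ) < 0 ↔ (σ m:ℕ) < σ j)
          ((by omega) : (3:ℕ) < 2 ↔ (σ m:ℕ) < σ k)
          ((by omega) : (1:ℕ) < 0 ↔ (σ i:ℕ) < σ j)
          ((by omega) : (1:ℕ) < 2 ↔ (σ i:ℕ) < σ k)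
          ((by omega) : (0:ℕ) < 2 ↔ (σ j:ℕ) < σ k))
      have hst' : (s:ℕ) < (t:ℕ) := by omega
      have hstne : (σ s : ℕ) ≠ (σ t : ℕ) := fun he => by
        have := congrArg Fin.val (hinj _ _ he); omega
      rcases lt_trichotomy (σ t : ℕ) (σ s : ℕ) with h1 | h1 | h1
      · -- decreasing
        left
        intro i j hmi hij
        have hmi' : (m:ℕ) < (i:ℕ) := hmi
        have hij' : (i:ℕ) < (j:ℕ) := hij
        have hjn : (j:ℕ) ≤ n - 1 := by have := j.isLt; omega
        rcases eq_or_lt_of_le hjn with hj1 | hj1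
        · -- j = t
          have hjt : j = t := Fin.val_injective (by omega)
          have hin : (i:ℕ) ≤ n - 2 := by omega
          rcases eq_or_lt_of_le hin with hi1 | hi1
          · have his : i = s := Fin.val_injective (by omega)
            rw [hjt, his]
            exact (show (σ t : ℕ) < (σ s : ℕ) from h1)
          · have h2 := (hTri i s t hmi' (by omega) (by omega)).2
            rw [hjt]
            exact (show (σ t : ℕ) < (σ i : ℕ) from h2)
        · exact (show (σ j : ℕ) < (σ i : ℕ) from
            (hTri i j t hmi' hij' (by omega)).1)
      · exact absurd h1.symm hstne
      · -- the j (j-1) ... 3 1 2 shape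
        right
        have hms : (m:ℕ) ≠ (s:ℕ) := by
          intro he
          have : (σ m : ℕ) = (σ s : ℕ) := by rw [Fin.val_injective he]
          have htm : t ≠ m := Fin.ne_of_lt hmt |>.symm
          have := hmax t htm
          omega
        have hmsv : (m:ℕ) < (s:ℕ) := by omega
        refine ⟨hmsv, ?_, h1, ?_⟩
        · intro i j hmi hij hjt
          have hmi' : (m:ℕ) < (i:ℕ) := hmi
          have hij' : (i:ℕ) < (j:ℕ) := hij
          have hjt' : (j:ℕ) ≠ (t:ℕ) := fun he => hjt (Fin.val_injective he)
          have hjn : (j:ℕ) < n - 1 := by have := j.isLt; omega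
          exact (show (σ j : ℕ) < (σ i : ℕ) from
            (hTri i j t hmi' hij' (by omega)).1)
        · intro i hmi his
          have hmi' : (m:ℕ) < (i:ℕ) := hmi
          have his' : (i:ℕ) < (s:ℕ) := his
          exact (show (σ t : ℕ) < (σ i : ℕ) from
            (hTri i s t hmi' his' (by omega)).2)
  · -- backward direction
    rintro ⟨hinc, hne0, hmt2, hsuf⟩
    have hinj : ∀ x y : Fin n, (σ x : ℕ) = (σ y : ℕ) → x = y := fun x y he =>
      σ.injective (Fin.val_injective he)
    -- the only possible ascent in the suffix is at positions (s, t)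
    have hasc : ∀ i j : Fin n, (m:ℕ) < i → (i:ℕ) < j → (σ i : ℕ) < (σ j : ℕ) →
        (i:ℕ) = n - 2 ∧ (j:ℕ) = n - 1 := by
      intro i j hmi hij hvij
      rcases hsuf with hdec | ⟨hms, hdec, hst, hbig⟩
      · have := hdec i j hmi hij
        have : (σ j : ℕ) < (σ i : ℕ) := this
        omega
      · by_cases hjt : (j:ℕ) = n - 1
        · have hjt' : j = t := Fin.val_injective (by omega)
          by_cases his : (i:ℕ) = n - 2
          · exact ⟨his, hjt⟩
          · have hisv : (i:ℕ) < n - 2 := by have := i.isLt; omega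
            have := hbig i hmi (show i < s from (by omega : (i:ℕ) < (s:ℕ)))
            have h2 : (σ t : ℕ) < (σ i : ℕ) := this
            rw [hjt'] at hvij
            omega
        · have hjt' : j ≠ t := fun he => hjt (by rw [he, ht])
          have := hdec i j hmi hij hjt'
          have : (σ j : ℕ) < (σ i : ℕ) := this
          omega
    have hquad : ∀ p0 p1 p2 p3 : Fin n, (p0:ℕ) < p1 → (p1:ℕ) < p2 → (p2:ℕ) < p3 →
        (σ p1 : ℕ) < (σ p0 : ℕ) →
        ((σ p1 : ℕ) < (σ p2 : ℕ) ∨ (σ p1 : ℕ) < (σ p3 : ℕ)) → False := by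
      intro p0 p1 p2 p3 h01 h12 h23 hv10 hdisj
      have hp3 : (p3:ℕ) ≤ n - 1 := by have := p3.isLt; omega
      have hp1m : (m:ℕ) < (p1:ℕ) := by
        have h1 : (σ p1 : ℕ) ≠ n - 1 := by
          have := (σ p0).isLt; omega
        have h2 : p1 ≠ m := fun he => by rw [he] at h1; omega
        have h3 : (p1:ℕ) ≠ (m:ℕ) := fun he => h2 (Fin.val_injective he)
        by_contra hcon
        have h4 : (p1:ℕ) < (m:ℕ) := by omega
        have := hinc p0 p1 (show p0 < p1 from h01) (show p1 < m from h4)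
        have : (σ p0 : ℕ) < (σ p1 : ℕ) := this
        omega
      rcases hdisj with hd | hd
      · have := hasc p1 p2 hp1m h12 hd
        omega
      · have := hasc p1 p3 hp1m (by omega) hd
        omega
    refine ⟨?_, ?_, ?_, ?_, ?_, ?_, ?_, ?_⟩ <;> rintro ⟨f, hf, hiff⟩
    -- for each pattern τ : extract positions and apply hquad
    · -- 2 1 0 3
      exact hquad (f 0) (f 1) (f 2) (f 3)
        (hf (by decide : (0:Fin 4) < 1)) (hf (by decide : (1:Fin 4) < 2))
        (hf (by decide : (2:Fin 4) < 3))
        ((hiff 1 0).mp (by decide))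
        (Or.inr ((hiff 1 3).mp (by decide)))
    · -- 2 1 3 0
      exact hquad (f 0) (f 1) (f 2) (f 3)
        (hf (by decide : (0:Fin 4) < 1)) (hf (by decide : (1:Fin 4) < 2))
        (hf (by decide : (2:Fin 4) < 3))
        ((hiff 1 0).mp (by decide))
        (Or.inl ((hiff 1 2).mp (by decide)))
    · -- 3 1 0 2
      exact hquad (f 0) (f 1) (f 2) (f 3)
        (hf (by decide : (0:Fin 4) < 1)) (hf (by decide : (1:Fin 4) < 2))
        (hf (by decide : (2:Fin 4) < 3))
        ((hiff 1 0).mp (by decide))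
        (Or.inr ((hiff 1 3).mp (by decide)))
    · -- 3 1 2 0
      exact hquad (f 0) (f 1) (f 2) (f 3)
        (hf (by decide : (0:Fin 4) < 1)) (hf (by decide : (1:Fin 4) < 2))
        (hf (by decide : (2:Fin 4) < 3))
        ((hiff 1 0).mp (by decide))
        (Or.inl ((hiff 1 2).mp (by decide)))
    · -- 2 0 1 3
      exact hquad (f 0) (f 1) (f 2) (f 3)
        (hf (by decide : (0:Fin 4) < 1)) (hf (by decide : (1:Fin 4) < 2))
        (hf (by decide : (2:Fin 4) < 3))
        ((hiff 1 0).mp (by decide))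
        (Or.inl ((hiff 1 2).mp (by decide)))
    · -- 2 0 3 1
      exact hquad (f 0) (f 1) (f 2) (f 3)
        (hf (by decide : (0:Fin 4) < 1)) (hf (by decide : (1:Fin 4) < 2))
        (hf (by decide : (2:Fin 4) < 3))
        ((hiff 1 0).mp (by decide))
        (Or.inl ((hiff 1 2).mp (by decide)))
    · -- 3 0 1 2
      exact hquad (f 0) (f 1) (f 2) (f 3)
        (hf (by decide : (0:Fin 4) < 1)) (hf (by decide : (1:Fin 4) < 2))
        (hf (by decide : (2:Fin 4) < 3))
        ((hiff 1 0).mp (by decide))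
        (Or.inl ((hiff 1 2).mp (by decide)))
    · -- 3 0 2 1
      exact hquad (f 0) (f 1) (f 2) (f 3)
        (hf (by decide : (0:Fin 4) < 1)) (hf (by decide : (1:Fin 4) < 2))
        (hf (by decide : (2:Fin 4) < 3))
        ((hiff 1 0).mp (by decide))
        (Or.inl ((hiff 1 2).mp (by decide)))
end
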